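/- arXiv:1512.06499 — 8 statements merged into one kernel-verified Lean document; each statement's English description precedes it below -/
import Mathlib

section
/- Let P be a probability distribution on X = {1,2,3,…} with P(1) ≥ P(2) ≥ ⋯, let ε ∈ [0,1), and let k* be the minimal integer with ∑_{i=1}^{k*} P(i) ≥ 1−ε. Define Q*(i) = P(i) for i < k*, Q*(k*) = 1−ε−∑_{i=1}^{k*−1} P(i), and Q*(i) = 0 for i > k*. Then for all α ∈ (0,1), the infimum defining r_α^ε(P) := inf_{Q ∈ B^ε(P)} ∑_i Q(i)^α is attained by Q*, i.e., ∑_i Q*(i)^α ≤ ∑_i Q(i)^α for all Q ∈ B^ε(P). -/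
/-!
`Q*` is the greedy filling of `P` up to mass `1 - ε`: take the atoms of `P` in order until that
mass is reached. On finitely many atoms, sort `Q` non-increasingly; since `P` is sorted, the sorted
`Q` still lies below `P`. Greedily filling `P` and the sorted `Q` up to a common level `T` gives two
sequences with the same total, the one from `P` having the larger partial sums, and the one from
`Q` being non-increasing. The tangent-line inequality for the concave `t ↦ t ^ α` at the latter,
summed by parts (Karamata's inequality), shows that the filling of `P` has the smaller sum of
`α`-th powers. A general `Q` is reached by letting the level `min (1 - ε) (∑ i < n, Q i)` tend to
`1 - ε`, the greedy filling being continuous in the level.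
-/

open scoped ENNReal NNReal
open Finset

/-- The smoothing set `B^ε(P)`. -/
def smoothSet {X : Type*} (P : X → ℝ≥0∞) (ε : ℝ) : Set (X → ℝ≥0∞) :=
  {Q | (∀ x, Q x ≤ P x) ∧ ENNReal.ofReal (1 - ε) ≤ ∑' x, Q x}

/-- The explicit truncated distribution `Q*` for a non-increasingly sorted `P`
(indexed by `ℕ`, so the paper's atoms `1,…,k*` are indices `0,…,k-1`):
`Q*(i) = P(i)` for `i+1 < k`, `Q*(k-1) = 1 - ε - ∑_{i<k-1} P(i)`, and `0` beyond. -/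
noncomputable def Qstar (P : ℕ → ℝ≥0∞) (ε : ℝ) (k : ℕ) : ℕ → ℝ≥0∞ := fun i =>
  if i + 1 < k then P i
  else if i + 1 = k then ENNReal.ofReal (1 - ε) - ∑ j ∈ Finset.range (k - 1), P j
  else 0

-- Meant for canonically ordered `M`, where `T - ∑ j ∈ range i, p j` truncates at `0`.
def greedyFill {M : Type*} [AddCommMonoid M] [LinearOrder M] [Sub M] (p : ℕ → M) (T : M)
    (i : ℕ) : M :=
  min (p i) (T - ∑ j ∈ range i, p j)

section greedyFill

variable {M : Type*} [AddCommMonoid M] [LinearOrder M] [CanonicallyOrderedAdd M] [Sub M]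
  [OrderedSub M]

theorem sum_range_greedyFill (p : ℕ → M) (T : M) (m : ℕ) :
    ∑ i ∈ range m, greedyFill p T i = min (∑ i ∈ range m, p i) T := by
  induction m with
  | zero => simp
  | succ m ih =>
    rw [sum_range_succ, sum_range_succ, ih, greedyFill]
    rcases le_total T (∑ i ∈ range m, p i) with h | h
    · rw [tsub_eq_zero_of_le h, min_eq_right h, min_eq_right zero_le, add_zero,
        min_eq_right (h.trans le_self_add)]
    · rw [min_eq_left h, ← min_add_add_left, add_tsub_cancel_of_le h]

theorem antitone_greedyFill {p : ℕ → M} (hp : Antitone p) (T : M) :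
    Antitone (greedyFill p T) :=
  antitone_nat_of_succ_le fun i =>
    min_le_min (hp i.le_succ) (tsub_le_tsub_left (sum_le_sum_of_subset (by simp)) T)

end greedyFill

theorem exists_antitone_rearrangement_le {M : Type*} [LinearOrder M] [OrderBot M]
    {p q : ℕ → M} (hp : Antitone p) (hqp : q ≤ p) (n : ℕ) :
    ∃ c : ℕ → M, Antitone c ∧ c ≤ p ∧ ∃ σ : Equiv.Perm (Fin n), ∀ i : Fin n, c i = q (σ i) := by
  set σ := Tuple.sort (fun i : Fin n => OrderDual.toDual (q i))
  have hσ : Antitone fun i => q (σ i) :=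
    monotone_toDual_comp_iff.1 (Tuple.monotone_sort fun i : Fin n => OrderDual.toDual (q i))
  set c : ℕ → M := fun i => if h : i < n then q (σ ⟨i, h⟩) else ⊥
  have hc : ∀ i : Fin n, c i = q (σ i) := fun i => dif_pos i.2
  refine ⟨c, fun i j hij => ?_, fun i => ?_, σ, hc⟩
  · by_cases hj : j < n
    · rw [hc ⟨i, hij.trans_lt hj⟩, hc ⟨j, hj⟩]
      exact hσ (Fin.mk_le_mk.2 hij)
    · simp [c, hj]
  · by_cases hi : i < n
    · -- σ maps the `i + 1` indices `≤ i` injectively, so one of them lands at or beyond `i`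
      obtain ⟨j, hji, hσj⟩ : ∃ j ≤ (⟨i, hi⟩ : Fin n), i ≤ σ j := by
        by_contra! h
        have := card_le_card_of_injOn σ (s := Iic ⟨i, hi⟩) (t := Iio ⟨i, hi⟩)
          (fun j hj => by simpa [Fin.lt_def] using h j (by simpa using hj)) σ.injective.injOn
        simp at this
      calc c i = q (σ ⟨i, hi⟩) := hc ⟨i, hi⟩
        _ ≤ q (σ j) := hσ hji
        _ ≤ p (σ j) := hqp _
        _ ≤ p i := hp hσj
    · simp [c, hi]

theorem Real.rpow_le_tangent {α : ℝ} (hα0 : 0 ≤ α) (hα1 : α ≤ 1) {a c : ℝ} (ha : 0 ≤ a)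
    (hc : 0 < c) :
    a ^ α ≤ c ^ α + α * c ^ (α - 1) * (a - c) := by
  have hbern := rpow_one_add_le_one_add_mul_self (s := a / c - 1)
    (by linarith [div_nonneg ha hc.le]) hα0 hα1
  rw [add_sub_cancel, Real.div_rpow ha hc.le, div_le_iff₀ (by positivity)] at hbern
  calc a ^ α ≤ (1 + α * (a / c - 1)) * c ^ α := hbern
    _ = c ^ α + α * (c ^ α / c) * (a - c) := by field_simp
    _ = c ^ α + α * c ^ (α - 1) * (a - c) := by rw [Real.rpow_sub_one hc.ne']

theorem sum_range_mul_nonneg_of_sum_range_nonpos {g d : ℕ → ℝ} {n : ℕ}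
    (hg : MonotoneOn g (Set.Iio n)) (hd : ∀ m ≤ n, ∑ i ∈ range m, d i ≤ 0)
    (hdn : ∑ i ∈ range n, d i = 0) :
    0 ≤ ∑ i ∈ range n, g i * d i := by
  have hparts := sum_range_by_parts g d n
  simp only [smul_eq_mul] at hparts
  rw [hparts, hdn, mul_zero, zero_sub, neg_nonneg]
  refine sum_nonpos fun i hi => mul_nonpos_of_nonneg_of_nonpos ?_ (hd _ ?_)
  · rw [mem_range] at hi
    exact sub_nonneg.2 (hg (Set.mem_Iio.2 (by omega)) (Set.mem_Iio.2 (by omega)) i.le_succ)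
  · rw [mem_range] at hi
    omega

theorem Real.sum_rpow_le_sum_rpow_of_sum_range_le_of_pos {α : ℝ} (hα0 : 0 < α) (hα1 : α ≤ 1)
    {a c : ℕ → ℝ} {n : ℕ} (ha : ∀ i, 0 ≤ a i) (hc : Antitone c) (hcpos : ∀ i < n, 0 < c i)
    (hle : ∀ m ≤ n, ∑ i ∈ range m, c i ≤ ∑ i ∈ range m, a i)
    (heq : ∑ i ∈ range n, c i = ∑ i ∈ range n, a i) :
    ∑ i ∈ range n, a i ^ α ≤ ∑ i ∈ range n, c i ^ α := by
  set g : ℕ → ℝ := fun i => α * c i ^ (α - 1)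
  have hg : MonotoneOn g (Set.Iio n) := fun i hi j hj hij =>
    mul_le_mul_of_nonneg_left
      (Real.rpow_le_rpow_of_nonpos (hcpos j hj) (hc hij) (by linarith)) hα0.le
  have habel : 0 ≤ ∑ i ∈ range n, g i * (c i - a i) := by
    refine sum_range_mul_nonneg_of_sum_range_nonpos hg (fun m hm => ?_) ?_ <;>
      simp only [sum_sub_distrib, sub_nonpos, sub_eq_zero]
    exacts [hle m hm, heq]
  calc ∑ i ∈ range n, a i ^ α ≤ ∑ i ∈ range n, (c i ^ α + g i * (a i - c i)) :=
        sum_le_sum fun i hi => Real.rpow_le_tangent hα0.le hα1 (ha i) (hcpos i (mem_range.1 hi))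
    _ = ∑ i ∈ range n, c i ^ α - ∑ i ∈ range n, g i * (c i - a i) := by
        rw [sum_add_distrib, sub_eq_add_neg, ← sum_neg_distrib]
        congr 1
        exact sum_congr rfl fun i _ => by ring
    _ ≤ ∑ i ∈ range n, c i ^ α := by linarith

theorem Real.sum_rpow_le_sum_rpow_of_sum_range_le {α : ℝ} (hα0 : 0 < α) (hα1 : α ≤ 1)
    {a c : ℕ → ℝ} {n : ℕ} (ha : ∀ i, 0 ≤ a i) (hc : Antitone c) (hc0 : ∀ i, 0 ≤ c i)
    (hle : ∀ m ≤ n, ∑ i ∈ range m, c i ≤ ∑ i ∈ range m, a i)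
    (heq : ∑ i ∈ range n, c i = ∑ i ∈ range n, a i) :
    ∑ i ∈ range n, a i ^ α ≤ ∑ i ∈ range n, c i ^ α := by
  induction n with
  | zero => simp
  | succ n ih =>
    rcases (hc0 n).lt_or_eq with hpos | hzero
    · exact sum_rpow_le_sum_rpow_of_sum_range_le_of_pos hα0 hα1 ha hc
        (fun i hi => hpos.trans_le (hc (Nat.le_of_lt_succ hi))) hle heq
    · -- the common total is already reached at `n`, which forces `a n = 0` as well
      rw [sum_range_succ, sum_range_succ, ← hzero, add_zero] at heq
      have han : a n = 0 := by
        linarith [hle n n.le_succ, ha n]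
      rw [sum_range_succ, sum_range_succ, han, ← hzero, Real.zero_rpow hα0.ne', add_zero,
        add_zero]
      exact ih (fun m hm => hle m (hm.trans n.le_succ)) (by linarith [hle n n.le_succ, ha n])

theorem NNReal.sum_rpow_le_sum_rpow_of_sum_range_le {α : ℝ} (hα0 : 0 < α) (hα1 : α ≤ 1)
    {a c : ℕ → ℝ≥0} {n : ℕ} (hc : Antitone c)
    (hle : ∀ m ≤ n, ∑ i ∈ range m, c i ≤ ∑ i ∈ range m, a i)
    (heq : ∑ i ∈ range n, c i = ∑ i ∈ range n, a i) :
    ∑ i ∈ range n, a i ^ α ≤ ∑ i ∈ range n, c i ^ α := by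
  have := Real.sum_rpow_le_sum_rpow_of_sum_range_le hα0 hα1
    (a := fun i => (a i : ℝ)) (c := fun i => (c i : ℝ)) (fun i => (a i).2)
    (NNReal.coe_mono.comp_antitone hc) (fun i => (c i).2)
    (fun m hm => by simpa only [← NNReal.coe_sum, NNReal.coe_le_coe] using hle m hm)
    (by simpa only [← NNReal.coe_sum] using congrArg NNReal.toReal heq)
  simpa only [← NNReal.coe_rpow, ← NNReal.coe_sum, NNReal.coe_le_coe] using this

theorem NNReal.sum_rpow_greedyFill_le {α : ℝ} (hα0 : 0 < α) (hα1 : α ≤ 1) {p q : ℕ → ℝ≥0}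
    (hp : Antitone p) (hqp : q ≤ p) {n : ℕ} {T : ℝ≥0} (hT : T ≤ ∑ i ∈ range n, q i) :
    ∑ i ∈ range n, greedyFill p T i ^ α ≤ ∑ i ∈ range n, q i ^ α := by
  obtain ⟨c, hc, hcp, σ, hcq⟩ := exists_antitone_rearrangement_le hp hqp n
  have hsum : ∀ g : ℝ≥0 → ℝ≥0, ∑ i ∈ range n, g (c i) = ∑ i ∈ range n, g (q i) := fun g => by
    rw [← Fin.sum_univ_eq_sum_range (fun i => g (c i)),
      ← Fin.sum_univ_eq_sum_range (fun i => g (q i))]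
    simp only [hcq]
    exact Equiv.sum_comp σ (fun i => g (q i))
  have hTc : T ≤ ∑ i ∈ range n, c i := hsum id ▸ hT
  have hTp : T ≤ ∑ i ∈ range n, p i := hTc.trans (sum_le_sum fun i _ => hcp i)
  calc ∑ i ∈ range n, greedyFill p T i ^ α ≤ ∑ i ∈ range n, greedyFill c T i ^ α := by
        refine NNReal.sum_rpow_le_sum_rpow_of_sum_range_le hα0 hα1 (antitone_greedyFill hc T)
          (fun m _ => ?_) ?_ <;> simp only [sum_range_greedyFill]
        · exact min_le_min_right T (sum_le_sum fun i _ => hcp i)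
        · rw [min_eq_right hTc, min_eq_right hTp]
    _ ≤ ∑ i ∈ range n, c i ^ α :=
        sum_le_sum fun i _ => NNReal.rpow_le_rpow (min_le_left _ _) hα0.le
    _ = ∑ i ∈ range n, q i ^ α := hsum (· ^ α)

theorem continuous_greedyFill (P : ℕ → ℝ≥0∞) (i : ℕ) :
    Continuous fun T => greedyFill P T i :=
  continuous_const.min (ENNReal.continuous_sub_right _)

theorem ENNReal.coe_greedyFill (p : ℕ → ℝ≥0) (T : ℝ≥0) (i : ℕ) :
    greedyFill (fun j => (p j : ℝ≥0∞)) T i = greedyFill p T i := by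
  simp only [greedyFill, ENNReal.coe_min, ENNReal.coe_sub, ENNReal.ofNNReal_finsetSum]

theorem ENNReal.sum_rpow_greedyFill_le {α : ℝ} (hα0 : 0 < α) (hα1 : α ≤ 1) {P Q : ℕ → ℝ≥0∞}
    (hP : ∀ i, P i ≠ ⊤) (hPa : Antitone P) (hQP : Q ≤ P) {n : ℕ} {T : ℝ≥0∞}
    (hT : T ≤ ∑ i ∈ range n, Q i) :
    ∑ i ∈ range n, greedyFill P T i ^ α ≤ ∑ i ∈ range n, Q i ^ α := by
  lift P to ℕ → ℝ≥0 using hP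
  lift Q to ℕ → ℝ≥0 using fun i => ne_top_of_le_ne_top ENNReal.coe_ne_top (hQP i)
  lift T to ℝ≥0 using ne_top_of_le_ne_top (by simp) hT
  simp only [ENNReal.coe_greedyFill, ← ENNReal.coe_rpow_of_nonneg _ hα0.le,
    ← ENNReal.ofNNReal_finsetSum, ENNReal.coe_le_coe] at hT ⊢
  exact NNReal.sum_rpow_greedyFill_le hα0 hα1 (fun i j h => ENNReal.coe_le_coe.1 (hPa h))
    (fun i => ENNReal.coe_le_coe.1 (hQP i)) hT

theorem ENNReal.tsum_rpow_greedyFill_le {α : ℝ} (hα0 : 0 < α) (hα1 : α ≤ 1) {P Q : ℕ → ℝ≥0∞}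
    (hP : ∀ i, P i ≠ ⊤) (hPa : Antitone P) (hQP : Q ≤ P) {T : ℝ≥0∞} (hT : T ≤ ∑' i, Q i) :
    ∑' i, greedyFill P T i ^ α ≤ ∑' i, Q i ^ α := by
  refine ENNReal.tsum_le_of_sum_range_le fun m => ?_
  set T' : ℕ → ℝ≥0∞ := fun n => min T (∑ i ∈ range n, Q i)
  have hT' : Filter.Tendsto T' Filter.atTop (nhds T) := by
    have := (tendsto_const_nhds (x := T)).min (ENNReal.tendsto_nat_tsum Q)
    rwa [min_eq_left hT] at this
  have hcont : Continuous fun t => ∑ i ∈ range m, greedyFill P t i ^ α :=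
    continuous_finsetSum _ fun i _ =>
      ENNReal.continuous_rpow_const.comp (continuous_greedyFill P i)
  refine le_of_tendsto ((hcont.tendsto T).comp hT') ?_
  filter_upwards [Filter.eventually_ge_atTop m] with n hmn
  calc ∑ i ∈ range m, greedyFill P (T' n) i ^ α ≤ ∑ i ∈ range n, greedyFill P (T' n) i ^ α :=
        sum_le_sum_of_subset (range_subset_range.2 hmn)
    _ ≤ ∑ i ∈ range n, Q i ^ α :=
        ENNReal.sum_rpow_greedyFill_le hα0 hα1 hP hPa hQP (min_le_right _ _)
    _ ≤ ∑' i, Q i ^ α := ENNReal.sum_le_tsum _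

theorem Qstar_eq_greedyFill {P : ℕ → ℝ≥0∞} {ε : ℝ} {k : ℕ}
    (hk : ENNReal.ofReal (1 - ε) ≤ ∑ i ∈ range k, P i)
    (hmin : ∀ j < k, ∑ i ∈ range j, P i < ENNReal.ofReal (1 - ε)) :
    Qstar P ε k = greedyFill P (ENNReal.ofReal (1 - ε)) := by
  funext i
  unfold Qstar greedyFill
  split_ifs with h₁ h₂
  · have := hmin (i + 1) h₁
    rw [sum_range_succ] at this
    exact (min_eq_left (lt_tsub_iff_left.2 this).le).symm
  · subst h₂
    rw [Nat.add_sub_cancel, sum_range_succ] at *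
    exact (min_eq_right (tsub_le_iff_left.2 hk)).symm
  · have hki : k ≤ i := by omega
    rw [tsub_eq_zero_of_le (hk.trans (sum_le_sum_of_subset (range_subset_range.2 hki))),
      min_eq_right zero_le]

theorem Qstar_minimizes_general (P : ℕ → ℝ≥0∞) (hP : ∑' i, P i = 1)
    (hmono : Antitone P) (ε α : ℝ)
    (hα : α ∈ Set.Ioo (0 : ℝ) 1) (k : ℕ)
    (hk : ENNReal.ofReal (1 - ε) ≤ ∑ i ∈ Finset.range k, P i)
    (hmin : ∀ j < k, ∑ i ∈ Finset.range j, P i < ENNReal.ofReal (1 - ε)) :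
    ∀ Q ∈ smoothSet P ε, ∑' i, (Qstar P ε k i) ^ α ≤ ∑' i, Q i ^ α := by
  rintro Q ⟨hQP, hQ⟩
  rw [Qstar_eq_greedyFill hk hmin]
  exact ENNReal.tsum_rpow_greedyFill_le hα.1 hα.2.le
    (fun i => ne_top_of_le_ne_top ENNReal.one_ne_top (hP ▸ ENNReal.le_tsum i)) hmono hQP hQ

/-- For `P` sorted non-increasingly, `ε ∈ [0,1)`, `k*` the minimal integer with
`∑_{i=1}^{k*} P(i) ≥ 1-ε`, and any `α ∈ (0,1)`, the infimum defining
`r_α^ε(P)` is attained by `Q*`: `∑_i Q*(i)^α ≤ ∑_i Q(i)^α` for every `Q ∈ B^ε(P)`. -/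
theorem Qstar_minimizes (P : ℕ → ℝ≥0∞) (hP : ∑' i, P i = 1)
    (hmono : Antitone P) (ε α : ℝ) (hε0 : 0 ≤ ε) (hε1 : ε < 1)
    (hα : α ∈ Set.Ioo (0 : ℝ) 1) (k : ℕ)
    (hk : ENNReal.ofReal (1 - ε) ≤ ∑ i ∈ Finset.range k, P i)
    (hmin : ∀ j < k, ∑ i ∈ Finset.range j, P i < ENNReal.ofReal (1 - ε)) :
    ∀ Q ∈ smoothSet P ε, ∑' i, (Qstar P ε k i) ^ α ≤ ∑' i, Q i ^ α :=
  Qstar_minimizes_general P hP hmono ε α hα k hk hmin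
end

section
/- One-shot converse: for any λ > 0, ε ∈ [0,1), and any variable-length prefix-free code (possibly with a stochastic encoder) with error probability at most ε, the exponential moment of the codeword length satisfies E_P[exp(λ ℓ(X))] ≥ exp(λ H_{1/(1+λ)}^ε(P)). -/
open scoped ENNReal Classical

/-- `r_α^ε(P) = inf_{Q ∈ B^ε(P)} ∑_x Q(x)^α`. -/
noncomputable def rSmooth {X : Type*} (P : X → ℝ≥0∞) (ε α : ℝ) : ℝ≥0∞ :=
  ⨅ Q ∈ smoothSet P ε, ∑' x, Q x ^ α

/-- The `ε`-smooth Rényi entropy of order `α` (extended-real valued). -/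
noncomputable def smoothRenyi {X : Type*} (P : X → ℝ≥0∞) (ε α : ℝ) : EReal :=
  (((1 - α)⁻¹ : ℝ) : EReal) * ENNReal.log (rSmooth P ε α)

/-! The correctly decoded mass `Q x = P x · Pr[ψ(C) = x | X = x]` lies in `B^ε(P)`, so with
`α = 1/(1+λ)` it suffices to bound `∑ₓ Q(x)^α` by `E[2^{λℓ}]^α`. Subadditivity of `t ↦ t^α`
bounds it by `∑_{x,c} F(x,c)^α` with `F(x,c) = P x W(c|x) [ψ c = x]`. On the support of `F`,
`F^α = (F 2^{λ|c|})^α (2^{-|c|})^{1-α}` because `λα = 1-α`, and Hölder's inequality leaves the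
factor `(∑_{x,c} [ψ c = x] 2^{-|c|})^{1-α}`. Each codeword is decoded to a single `x`, so this
is a Kraft sum of a prefix-free code and is at most `1`. -/

namespace ENNReal

theorem rpow_sum_le_sum_rpow {ι : Type*} (s : Finset ι) (f : ι → ℝ≥0∞) {a : ℝ}
    (ha : 0 < a) (ha1 : a ≤ 1) : (∑ i ∈ s, f i) ^ a ≤ ∑ i ∈ s, f i ^ a := by
  induction s using Finset.cons_induction with
  | empty => simp [ENNReal.zero_rpow_of_pos ha]
  | cons i s hi ih =>
    rw [Finset.sum_cons, Finset.sum_cons]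
    exact (rpow_add_le_add_rpow _ _ ha.le ha1).trans (add_le_add le_rfl ih)

theorem rpow_tsum_le_tsum_rpow {ι : Type*} (f : ι → ℝ≥0∞) {a : ℝ} (ha : 0 < a) (ha1 : a ≤ 1) :
    (∑' i, f i) ^ a ≤ ∑' i, f i ^ a := by
  rw [ENNReal.tsum_eq_iSup_sum, ← le_rpow_inv_iff ha]
  exact iSup_le fun s => (le_rpow_inv_iff ha).mpr
    ((rpow_sum_le_sum_rpow s f ha ha1).trans (ENNReal.sum_le_tsum s))

theorem tsum_rpow_mul_rpow_le {ι : Type*} (u v : ι → ℝ≥0∞) {a : ℝ} (ha : 0 < a) (ha1 : a < 1) :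
    ∑' i, u i ^ a * v i ^ (1 - a) ≤ (∑' i, u i) ^ a * (∑' i, v i) ^ (1 - a) := by
  let : MeasurableSpace ι := ⊤
  have hpq : (1 / a).HolderConjugate (1 / (1 - a)) := by
    rw [Real.holderConjugate_iff, one_div, one_div, inv_inv, inv_inv, one_lt_inv₀ ha]
    exact ⟨ha1, by ring⟩
  have h := lintegral_mul_le_Lp_mul_Lq MeasureTheory.Measure.count hpq
    (f := fun i => u i ^ a) (g := fun i => v i ^ (1 - a))
    measurable_from_top.aemeasurable measurable_from_top.aemeasurable
  simpa only [Pi.mul_apply, MeasureTheory.lintegral_count, ← rpow_mul, mul_one_div,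
    div_self ha.ne', div_self (sub_pos.mpr ha1).ne', rpow_one, one_div_one_div] using h

theorem tsum_rpow_le_of_rpow_mul_rpow_eq_one {ι : Type*} (F e g : ι → ℝ≥0∞) {a : ℝ}
    (ha : 0 < a) (ha1 : a < 1) (h : ∀ i, F i ≠ 0 → e i ^ a * g i ^ (1 - a) = 1) :
    ∑' i, F i ^ a ≤ (∑' i, F i * e i) ^ a * (∑' i, g i) ^ (1 - a) := by
  refine le_trans (ENNReal.tsum_le_tsum fun i => ?_) (tsum_rpow_mul_rpow_le _ _ ha ha1)
  by_cases hF : F i = 0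
  · simp [hF, zero_rpow_of_pos ha]
  · rw [mul_rpow_of_nonneg _ _ ha.le, mul_assoc, h i hF, mul_one]

theorem ofReal_exp_rpow_mul_ofReal_exp_rpow (s t a b : ℝ) :
    ENNReal.ofReal (Real.exp s) ^ a * ENNReal.ofReal (Real.exp t) ^ b =
      ENNReal.ofReal (Real.exp (s * a + t * b)) := by
  rw [ofReal_rpow_of_pos (Real.exp_pos _), ofReal_rpow_of_pos (Real.exp_pos _),
    ← Real.exp_mul, ← Real.exp_mul, ← ofReal_mul (Real.exp_nonneg _), ← Real.exp_add]

theorem ofReal_exp_neg_mul_log_two (n : ℕ) :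
    ENNReal.ofReal (Real.exp (-(n * Real.log 2))) = 2⁻¹ ^ n := by
  rw [neg_mul_eq_mul_neg, ← Real.log_inv, Real.exp_nat_mul, Real.exp_log (by norm_num),
    ofReal_pow (by norm_num), ofReal_inv_of_pos (by norm_num), ofReal_ofNat]

theorem ofReal_exp_mul_log_two_rpow_mul_inv_two_pow_rpow {lam a : ℝ} (h : lam * a = 1 - a)
    (n : ℕ) : ENNReal.ofReal (Real.exp (lam * (n * Real.log 2))) ^ a * (2⁻¹ ^ n) ^ (1 - a) = 1 := by
  rw [← ofReal_exp_neg_mul_log_two, ofReal_exp_rpow_mul_ofReal_exp_rpow,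
    show lam * (n * Real.log 2) * a + -(n * Real.log 2) * (1 - a) = 0 by
      linear_combination (n * Real.log 2) * h,
    Real.exp_zero, ofReal_one]

end ENNReal

theorem exp_mul_smoothRenyi {X : Type*} (P : X → ℝ≥0∞) (ε : ℝ) {lam : ℝ} (h0 : lam ≠ 0)
    (h1 : 1 + lam ≠ 0) :
    EReal.exp (lam * smoothRenyi P ε (1 / (1 + lam))) =
      rSmooth P ε (1 / (1 + lam)) ^ (1 + lam) := by
  have hc : lam * (1 - 1 / (1 + lam))⁻¹ = 1 + lam := by
    field_simp
    rw [add_sub_cancel_left, div_self h0]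
  rw [smoothRenyi, ← mul_assoc, ← EReal.coe_mul, hc, mul_comm, EReal.exp_mul, ENNReal.exp_log]

namespace InformationTheory

def IsPrefixFree {α : Type*} (S : Set (List α)) : Prop :=
  ∀ c₁ ∈ S, ∀ c₂ ∈ S, c₁ <+: c₂ → c₁ = c₂

theorem IsPrefixFree.mono {α : Type*} {S T : Set (List α)} (hS : IsPrefixFree S) (hT : T ⊆ S) :
    IsPrefixFree T :=
  fun c₁ h₁ c₂ h₂ => hS c₁ (hT h₁) c₂ (hT h₂)

theorem IsPrefixFree.uniquelyDecodable {α : Type*} {S : Set (List α)} (hS : IsPrefixFree S)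
    (hnil : [] ∉ S) : UniquelyDecodable S := by
  intro L₁
  induction L₁ with
  | nil =>
    rintro (_ | ⟨b, L₂⟩) - h₂ hflat
    · rfl
    · obtain ⟨rfl, -⟩ : b = [] ∧ _ := by simpa using hflat.symm
      exact absurd (h₂ [] (by simp)) hnil
  | cons a L₁ ih =>
    rintro (_ | ⟨b, L₂⟩) h₁ h₂ hflat
    · obtain ⟨rfl, -⟩ : a = [] ∧ _ := by simpa using hflat
      exact absurd (h₁ [] (by simp)) hnil
    · have ha : a ∈ S := h₁ a (by simp)
      have hb : b ∈ S := h₂ b (by simp)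
      have hab : a = b := by
        simp only [List.flatten_cons] at hflat
        rcases List.prefix_or_prefix_of_prefix (List.prefix_append a L₁.flatten)
          (hflat ▸ List.prefix_append b L₂.flatten) with h | h
        · exact hS a ha b hb h
        · exact (hS b hb a ha h).symm
      subst hab
      simp only [List.flatten_cons, List.append_cancel_left_eq] at hflat
      rw [ih L₂ (fun w hw => h₁ w (by simp [hw])) (fun w hw => h₂ w (by simp [hw])) hflat]

theorem IsPrefixFree.tsum_inv_two_pow_length_le_one {S : Set (List Bool)} (hS : IsPrefixFree S) :
    ∑' c : S, (2⁻¹ : ℝ≥0∞) ^ (c : List Bool).length ≤ 1 := by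
  by_cases hnil : [] ∈ S
  · have hsub : S ⊆ {[]} := fun c hc => (hS [] hnil c hc List.nil_prefix).symm
    calc ∑' c : S, (2⁻¹ : ℝ≥0∞) ^ (c : List Bool).length
        ≤ ∑' c : ({[]} : Set (List Bool)), (2⁻¹ : ℝ≥0∞) ^ (c : List Bool).length :=
          ENNReal.tsum_mono_subtype (fun c => (2⁻¹ : ℝ≥0∞) ^ c.length) hsub
      _ = 1 := by simp
  · rw [ENNReal.tsum_eq_iSup_sum]
    refine iSup_le fun T => ?_
    set T' := T.map (Function.Embedding.subtype _)
    have hT' : (T' : Set (List Bool)) ⊆ S := by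
      intro c hc
      obtain ⟨c, -, rfl⟩ := Finset.mem_map.mp hc
      exact c.2
    have hkraft := kraft_mcmillan_inequality ((hS.mono hT').uniquelyDecodable fun h => hnil (hT' h))
    rw [Fintype.card_bool, Nat.cast_ofNat, ← ENNReal.ofReal_le_one,
      ENNReal.ofReal_sum_of_nonneg fun _ _ => by positivity, Finset.sum_map] at hkraft
    simpa [ENNReal.ofReal_pow, ENNReal.ofReal_inv_of_pos, ENNReal.inv_pow] using hkraft

section Code

variable {X C : Type*} (P : X → ℝ≥0∞) (W : X → C → ℝ≥0∞) (ψ : C → X)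

noncomputable def correctMass (x : X) : ℝ≥0∞ :=
  P x * ∑' c, if ψ c = x then W x c else 0

theorem correctMass_le (hW : ∀ x, ∑' c, W x c = 1) (x : X) : correctMass P W ψ x ≤ P x := by
  refine mul_le_of_le_one_right' ((ENNReal.tsum_le_tsum fun c => ?_).trans (hW x).le)
  split_ifs <;> simp

theorem tsum_correctMass_add_errorProb (hP : ∑' x, P x = 1) (hW : ∀ x, ∑' c, W x c = 1) :
    ∑' x, correctMass P W ψ x + ∑' x, P x * ∑' c, (if ψ c = x then 0 else W x c) = 1 := by
  rw [← ENNReal.tsum_add, ← hP]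
  refine tsum_congr fun x => ?_
  rw [correctMass, ← mul_add, ← ENNReal.tsum_add]
  conv_rhs => rw [← mul_one (P x), ← hW x]
  congr 2 with c
  split_ifs <;> simp

theorem correctMass_mem_smoothSet {ε : ℝ} (hP : ∑' x, P x = 1) (hW : ∀ x, ∑' c, W x c = 1)
    (hε : 0 ≤ ε)
    (herror : ∑' x, P x * ∑' c, (if ψ c = x then 0 else W x c) ≤ ENNReal.ofReal ε) :
    correctMass P W ψ ∈ smoothSet P ε := by
  refine ⟨correctMass_le P W ψ hW, ?_⟩
  calc ENNReal.ofReal (1 - ε) = 1 - ENNReal.ofReal ε := by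
        rw [ENNReal.ofReal_sub 1 hε, ENNReal.ofReal_one]
    _ ≤ 1 - ∑' x, P x * ∑' c, (if ψ c = x then 0 else W x c) := tsub_le_tsub_left herror 1
    _ ≤ ∑' x, correctMass P W ψ x := by
        rw [tsub_le_iff_right, tsum_correctMass_add_errorProb P W ψ hP hW]

end Code

section BinaryCode

variable {X : Type*} (P : X → ℝ≥0∞) (W : X → List Bool → ℝ≥0∞) (ψ : List Bool → X)

theorem tsum_ite_inv_two_pow_length_le_one (hprefix : IsPrefixFree {c | ∃ x, W x c ≠ 0}) :
    ∑' p : X × List Bool,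
      (if ψ p.2 = p.1 ∧ W p.1 p.2 ≠ 0 then (2⁻¹ : ℝ≥0∞) ^ p.2.length else 0) ≤ 1 := by
  set S : Set (List Bool) := {c | W (ψ c) c ≠ 0}
  rw [ENNReal.tsum_prod', ENNReal.tsum_comm]
  calc ∑' c, ∑' x, (if ψ c = x ∧ W x c ≠ 0 then (2⁻¹ : ℝ≥0∞) ^ c.length else 0)
      = ∑' c, S.indicator (fun c => (2⁻¹ : ℝ≥0∞) ^ c.length) c := by
        refine tsum_congr fun c => (tsum_eq_single (ψ c) fun x hx => if_neg ?_).trans ?_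
        · exact fun h => hx h.1.symm
        · simp [S, Set.indicator_apply]
    _ = ∑' c : S, (2⁻¹ : ℝ≥0∞) ^ (c : List Bool).length := (tsum_subtype _ _).symm
    _ ≤ 1 := (hprefix.mono fun c hc => ⟨ψ c, hc⟩).tsum_inv_two_pow_length_le_one

theorem tsum_correctMass_rpow_le {lam : ℝ} (hlam : 0 < lam)
    (hprefix : IsPrefixFree {c | ∃ x, W x c ≠ 0}) :
    ∑' x, correctMass P W ψ x ^ (1 / (1 + lam)) ≤
      (∑' x, P x * ∑' c, W x c *
        ENNReal.ofReal (Real.exp (lam * ((c.length : ℝ) * Real.log 2)))) ^ (1 / (1 + lam)) := by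
  set a := 1 / (1 + lam) with ha_def
  have ha : 0 < a := by positivity
  have ha1 : a < 1 := by rw [ha_def, div_lt_one (by positivity)]; linarith
  have hlam_a : lam * a = 1 - a := by rw [ha_def]; field_simp; ring
  set F : X × List Bool → ℝ≥0∞ := fun p => P p.1 * if ψ p.2 = p.1 then W p.1 p.2 else 0
  set e : List Bool → ℝ≥0∞ := fun c => ENNReal.ofReal (Real.exp (lam * (c.length * Real.log 2)))
  set g : X × List Bool → ℝ≥0∞ := fun p =>
    if ψ p.2 = p.1 ∧ W p.1 p.2 ≠ 0 then 2⁻¹ ^ p.2.length else 0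
  have hweight : ∀ p, F p ≠ 0 → e p.2 ^ a * g p ^ (1 - a) = 1 := by
    rintro ⟨x, c⟩ hF
    obtain ⟨hx, -, hW⟩ : ψ c = x ∧ P x ≠ 0 ∧ W x c ≠ 0 := by simpa [F] using hF
    simp only [e, g, if_pos (And.intro hx hW)]
    exact ENNReal.ofReal_exp_mul_log_two_rpow_mul_inv_two_pow_rpow hlam_a c.length
  have hmoment : ∑' p, F p * e p.2 ≤ ∑' x, P x * ∑' c, W x c * e c := by
    rw [ENNReal.tsum_prod']
    refine ENNReal.tsum_le_tsum fun x => ?_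
    rw [← ENNReal.tsum_mul_left]
    refine ENNReal.tsum_le_tsum fun c => ?_
    rw [mul_assoc]
    gcongr
    split_ifs <;> simp
  calc ∑' x, correctMass P W ψ x ^ a ≤ ∑' p, F p ^ a := by
        rw [ENNReal.tsum_prod']
        refine ENNReal.tsum_le_tsum fun x => ?_
        rw [correctMass, ← ENNReal.tsum_mul_left]
        exact ENNReal.rpow_tsum_le_tsum_rpow _ ha ha1.le
    _ ≤ (∑' p, F p * e p.2) ^ a * (∑' p, g p) ^ (1 - a) :=
        ENNReal.tsum_rpow_le_of_rpow_mul_rpow_eq_one F (e ∘ Prod.snd) g ha ha1 hweight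
    _ ≤ (∑' x, P x * ∑' c, W x c * e c) ^ a * 1 ^ (1 - a) := by
        gcongr
        exact tsum_ite_inv_two_pow_length_le_one W ψ hprefix
    _ = (∑' x, P x * ∑' c, W x c * e c) ^ a := by rw [ENNReal.one_rpow, mul_one]

end BinaryCode

end InformationTheory

theorem one_shot_converse_general {X : Type*} (P : X → ℝ≥0∞)
    (hP : ∑' x, P x = 1) (lam ε : ℝ) (hlam : 0 < lam) (hε0 : 0 ≤ ε)
    (W : X → List Bool → ℝ≥0∞) (ψ : List Bool → X)
    (hW : ∀ x, ∑' c, W x c = 1)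
    (hprefix : ∀ c₁ c₂ : List Bool, (∃ x, W x c₁ ≠ 0) → (∃ x, W x c₂ ≠ 0) →
      c₁ <+: c₂ → c₁ = c₂)
    (herror : (∑' x, P x * ∑' c, if ψ c = x then 0 else W x c) ≤ ENNReal.ofReal ε) :
    EReal.exp ((lam : EReal) * smoothRenyi P ε (1 / (1 + lam))) ≤
      ∑' x, P x * ∑' c, W x c *
        ENNReal.ofReal (Real.exp (lam * ((c.length : ℝ) * Real.log 2))) := by
  have h1 : 1 + lam ≠ 0 := by positivity
  have hsmooth : rSmooth P ε (1 / (1 + lam)) ≤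
      (∑' x, P x * ∑' c, W x c *
        ENNReal.ofReal (Real.exp (lam * ((c.length : ℝ) * Real.log 2)))) ^ (1 / (1 + lam)) :=
    (iInf₂_le _ (InformationTheory.correctMass_mem_smoothSet P W ψ hP hW hε0 herror)).trans
      (InformationTheory.tsum_correctMass_rpow_le P W ψ hlam
        fun c₁ h₁ c₂ h₂ => hprefix c₁ c₂ h₁ h₂)
  rw [exp_mul_smoothRenyi P ε hlam.ne' h1]
  refine (ENNReal.rpow_le_rpow hsmooth (by positivity)).trans_eq ?_
  rw [← ENNReal.rpow_mul, one_div_mul_cancel h1, ENNReal.rpow_one]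

/-- One-shot converse: for any `λ > 0`, `ε ∈ [0,1)` and any variable-length code
with prefix-free codeword set, (possibly stochastic) encoder `W` and decoder `ψ`
whose error probability is at most `ε`, the exponential moment of the codeword
length (in nats) satisfies `E_P[exp(λ ℓ(X))] ≥ exp(λ H_{1/(1+λ)}^ε(P))`. -/
theorem one_shot_converse {X : Type*} [Countable X] (P : X → ℝ≥0∞)
    (hP : ∑' x, P x = 1) (lam ε : ℝ) (hlam : 0 < lam) (hε0 : 0 ≤ ε) (hε1 : ε < 1)
    (W : X → List Bool → ℝ≥0∞) (ψ : List Bool → X)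
    (hW : ∀ x, ∑' c, W x c = 1)
    (hprefix : ∀ c₁ c₂ : List Bool, (∃ x, W x c₁ ≠ 0) → (∃ x, W x c₂ ≠ 0) →
      c₁ <+: c₂ → c₁ = c₂)
    (herror : (∑' x, P x * ∑' c, if ψ c = x then 0 else W x c) ≤ ENNReal.ofReal ε) :
    EReal.exp ((lam : EReal) * smoothRenyi P ε (1 / (1 + lam))) ≤
      ∑' x, P x * ∑' c, W x c *
        ENNReal.ofReal (Real.exp (lam * ((c.length : ℝ) * Real.log 2))) :=
  one_shot_converse_general P hP lam ε hlam hε0 W ψ hW hprefix herror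
end

section
/- Let A be a countable set and ℓ̄ : A → ℝ≥0 satisfy the Kraft-type inequality ∑_{x∈A} exp(−ℓ̄(x)) ≤ 1. Then for any nonnegative weights Q on A with 0 < ∑_{x∈A} Q(x)^{1/(1+λ)} < ∞ and any λ > 0, ∑_{x∈A} Q(x) exp(λ ℓ̄(x)) ≥ (∑_{x∈A} Q(x)^{1/(1+λ)})^{1+λ}, with equality when ℓ̄(x) = −log( Q(x)^{1/(1+λ)} / ∑_{x'} Q(x')^{1/(1+λ)} ). -/
open scoped ENNReal

/-!
Put `p = 1 / (1 + λ)`. Pointwise `Q^p = (Q e^{λℓ})^p (e^{-ℓ})^{λp}`, so Hölder's inequality with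
the exponents `p` and `λp`, which sum to `1`, together with the Kraft inequality gives
`∑ Q^p ≤ (∑ Q e^{λℓ})^p`; raise both sides to the power `1 + λ`. For the optimal lengths,
`e^{λℓ(x)} = (T / Q(x)^p)^λ` with `T = ∑ Q^p`, so every term `Q(x) e^{λℓ(x)}` equals
`T^λ Q(x)^p` and the sum is `T^λ T = T^{1+λ}`.
-/

namespace ENNReal

theorem tsum_rpow_mul_rpow_le_s6 {ι : Type*} (f g : ι → ℝ≥0∞) {p q : ℝ} (hp : 0 ≤ p) (hq : 0 ≤ q)
    (hpq : p + q = 1) :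
    ∑' i, f i ^ p * g i ^ q ≤ (∑' i, f i) ^ p * (∑' i, g i) ^ q := by
  let : MeasurableSpace ι := ⊤
  simpa only [MeasureTheory.lintegral_count' measurable_from_top] using
    lintegral_mul_norm_pow_le (μ := MeasureTheory.Measure.count)
      measurable_from_top.aemeasurable measurable_from_top.aemeasurable hp hq hpq

theorem ofReal_exp_rpow (a r : ℝ) :
    ENNReal.ofReal (Real.exp a) ^ r = ENNReal.ofReal (Real.exp (a * r)) := by
  rw [ENNReal.ofReal_rpow_of_pos (Real.exp_pos a), ← Real.exp_mul]

theorem mul_ofReal_exp_rpow_mul_ofReal_exp_neg_rpow (a : ℝ≥0∞) (lam t : ℝ) {p : ℝ} (hp : 0 ≤ p) :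
    (a * ENNReal.ofReal (Real.exp (lam * t))) ^ p * ENNReal.ofReal (Real.exp (-t)) ^ (lam * p) =
      a ^ p := by
  rw [mul_rpow_of_nonneg _ _ hp, ofReal_exp_rpow, ofReal_exp_rpow, mul_assoc,
    ← ofReal_mul (Real.exp_pos _).le, ← Real.exp_add]
  rw [show lam * t * p + -t * (lam * p) = 0 by ring, Real.exp_zero, ofReal_one, mul_one]

theorem ofReal_exp_mul_neg_log_toReal_div {a b : ℝ≥0∞} (ha₀ : a ≠ 0) (ha : a ≠ ∞) (hb₀ : b ≠ 0)
    (hb : b ≠ ∞) (r : ℝ) :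
    ENNReal.ofReal (Real.exp (r * -Real.log (a.toReal / b.toReal))) = (b / a) ^ r := by
  have hpos : 0 < b.toReal / a.toReal := div_pos (toReal_pos hb₀ hb) (toReal_pos ha₀ ha)
  rw [← Real.log_inv, inv_div, mul_comm, ← Real.rpow_def_of_pos hpos,
    ← ENNReal.ofReal_rpow_of_pos hpos, ← toReal_div, ofReal_toReal (div_ne_top hb ha₀)]

theorem mul_div_rpow_one_div_one_add_rpow {lam : ℝ} {a b : ℝ≥0∞} (ha₀ : a ≠ 0) (ha : a ≠ ∞)
    (hlam : 0 ≤ lam) :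
    a * (b / a ^ (1 / (1 + lam))) ^ lam = b ^ lam * a ^ (1 / (1 + lam)) := by
  have hexp : 1 - 1 / (1 + lam) * lam = 1 / (1 + lam) := by field_simp; ring
  conv_rhs => rw [← hexp, rpow_sub _ _ ha₀ ha, rpow_one]
  rw [div_rpow_of_nonneg _ _ hlam, ← rpow_mul]
  simp only [div_eq_mul_inv]
  ring

end ENNReal

section Campbell

variable {ι : Type*} {lam : ℝ} (Q : ι → ℝ≥0∞) (ℓ : ι → ℝ)

theorem tsum_rpow_le_tsum_mul_exp_rpow (hlam : 0 ≤ lam)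
    (hkraft : ∑' x, ENNReal.ofReal (Real.exp (-ℓ x)) ≤ 1) :
    ∑' x, Q x ^ (1 / (1 + lam)) ≤
      (∑' x, Q x * ENNReal.ofReal (Real.exp (lam * ℓ x))) ^ (1 / (1 + lam)) := by
  have hp : 0 ≤ 1 / (1 + lam) := by positivity
  have hpq : 1 / (1 + lam) + lam * (1 / (1 + lam)) = 1 := by field_simp
  calc ∑' x, Q x ^ (1 / (1 + lam))
      = ∑' x, (Q x * ENNReal.ofReal (Real.exp (lam * ℓ x))) ^ (1 / (1 + lam)) *
          ENNReal.ofReal (Real.exp (-ℓ x)) ^ (lam * (1 / (1 + lam))) := by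
        simp only [ENNReal.mul_ofReal_exp_rpow_mul_ofReal_exp_neg_rpow _ _ _ hp]
    _ ≤ (∑' x, Q x * ENNReal.ofReal (Real.exp (lam * ℓ x))) ^ (1 / (1 + lam)) *
          (∑' x, ENNReal.ofReal (Real.exp (-ℓ x))) ^ (lam * (1 / (1 + lam))) :=
        ENNReal.tsum_rpow_mul_rpow_le_s6 _ _ hp (by positivity) hpq
    _ ≤ (∑' x, Q x * ENNReal.ofReal (Real.exp (lam * ℓ x))) ^ (1 / (1 + lam)) := by
        grw [hkraft, ENNReal.one_rpow, mul_one]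

theorem tsum_rpow_rpow_le_tsum_mul_exp (hlam : 0 ≤ lam)
    (hkraft : ∑' x, ENNReal.ofReal (Real.exp (-ℓ x)) ≤ 1) :
    (∑' x, Q x ^ (1 / (1 + lam))) ^ (1 + lam) ≤
      ∑' x, Q x * ENNReal.ofReal (Real.exp (lam * ℓ x)) := by
  rw [← ENNReal.rpow_le_rpow_iff (z := 1 / (1 + lam)) (by positivity), ← ENNReal.rpow_mul,
    mul_one_div_cancel (by positivity), ENNReal.rpow_one]
  exact tsum_rpow_le_tsum_mul_exp_rpow Q ℓ hlam hkraft

theorem tsum_mul_exp_eq_of_eq_neg_log (hlam : 0 ≤ lam)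
    (h₀ : ∑' x, Q x ^ (1 / (1 + lam)) ≠ 0) (htop : ∑' x, Q x ^ (1 / (1 + lam)) ≠ ∞)
    (hℓ : ∀ x, ℓ x = -Real.log ((Q x ^ (1 / (1 + lam))).toReal /
      (∑' y, Q y ^ (1 / (1 + lam))).toReal)) :
    ∑' x, Q x * ENNReal.ofReal (Real.exp (lam * ℓ x)) =
      (∑' x, Q x ^ (1 / (1 + lam))) ^ (1 + lam) := by
  set T := ∑' x, Q x ^ (1 / (1 + lam))
  have hp : 0 < 1 / (1 + lam) := by positivity
  have hterm (x : ι) :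
      Q x * ENNReal.ofReal (Real.exp (lam * ℓ x)) = T ^ lam * Q x ^ (1 / (1 + lam)) := by
    rcases eq_or_ne (Q x) 0 with hQ₀ | hQ₀
    · rw [hQ₀, zero_mul, ENNReal.zero_rpow_of_pos hp, mul_zero]
    have hQp : Q x ^ (1 / (1 + lam)) ≠ ∞ := ne_top_of_le_ne_top htop (ENNReal.le_tsum x)
    have hQ : Q x ≠ ∞ := by rwa [Ne, ← ENNReal.rpow_eq_top_iff_of_pos hp]
    rw [hℓ x, ENNReal.ofReal_exp_mul_neg_log_toReal_div (by positivity) hQp h₀ htop,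
      ENNReal.mul_div_rpow_one_div_one_add_rpow hQ₀ hQ hlam]
  rw [tsum_congr hterm, ENNReal.tsum_mul_left, ENNReal.rpow_add_of_nonneg _ _ zero_le_one hlam,
    ENNReal.rpow_one, mul_comm]

end Campbell

theorem campbell_bound_general {A : Type*} (lam : ℝ) (hlam : 0 < lam)
    (Q : A → ℝ≥0∞) (ℓ : A → ℝ)
    (hS0 : 0 < ∑' x, Q x ^ (1 / (1 + lam)))
    (hStop : ∑' x, Q x ^ (1 / (1 + lam)) ≠ ∞)
    (hkraft : ∑' x, ENNReal.ofReal (Real.exp (-ℓ x)) ≤ 1) :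
    (∑' x, Q x ^ (1 / (1 + lam))) ^ (1 + lam) ≤
        ∑' x, Q x * ENNReal.ofReal (Real.exp (lam * ℓ x)) ∧
      ((∀ x, ℓ x = -Real.log ((Q x ^ (1 / (1 + lam))).toReal /
          (∑' y, Q y ^ (1 / (1 + lam))).toReal)) →
        ∑' x, Q x * ENNReal.ofReal (Real.exp (lam * ℓ x)) =
          (∑' x, Q x ^ (1 / (1 + lam))) ^ (1 + lam)) :=
  ⟨tsum_rpow_rpow_le_tsum_mul_exp Q ℓ hlam.le hkraft,
    tsum_mul_exp_eq_of_eq_neg_log Q ℓ hlam.le hS0.ne' hStop⟩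

/-- Campbell-type optimization bound used in the converse proof: if the
(real-valued, nonnegative) lengths `ℓ̄` satisfy the Kraft-type inequality
`∑_x exp(-ℓ̄(x)) ≤ 1`, then for nonnegative weights `Q` with
`0 < ∑_x Q(x)^{1/(1+λ)} < ∞`,
`∑_x Q(x) exp(λ ℓ̄(x)) ≥ (∑_x Q(x)^{1/(1+λ)})^{1+λ}`, with equality when
`ℓ̄(x) = -log(Q(x)^{1/(1+λ)} / ∑_{x'} Q(x')^{1/(1+λ)})`. -/
theorem campbell_bound {A : Type*} [Countable A] (lam : ℝ) (hlam : 0 < lam)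
    (Q : A → ℝ≥0∞) (ℓ : A → ℝ) (hℓ : ∀ x, 0 ≤ ℓ x)
    (hS0 : 0 < ∑' x, Q x ^ (1 / (1 + lam)))
    (hStop : ∑' x, Q x ^ (1 / (1 + lam)) ≠ ∞)
    (hkraft : ∑' x, ENNReal.ofReal (Real.exp (-ℓ x)) ≤ 1) :
    (∑' x, Q x ^ (1 / (1 + lam))) ^ (1 + lam) ≤
        ∑' x, Q x * ENNReal.ofReal (Real.exp (lam * ℓ x)) ∧
      ((∀ x, ℓ x = -Real.log ((Q x ^ (1 / (1 + lam))).toReal /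
          (∑' y, Q y ^ (1 / (1 + lam))).toReal)) →
        ∑' x, Q x * ENNReal.ofReal (Real.exp (lam * ℓ x)) =
          (∑' x, Q x ^ (1 / (1 + lam))) ^ (1 + lam)) :=
  campbell_bound_general lam hlam Q ℓ hS0 hStop hkraft
end

section
/- Smoothing lower bound (Renner–Wolf Lemma 2 corollary): for α ∈ (0,1), ε ∈ [0,1), and ε' > 0 with ε + ε' < 1, the smooth Rényi entropy satisfies H_α^ε(P) ≥ H_0^{ε+ε'}(P) − log(1/ε')/(1−α), where H_0^δ(P) = min{ log|A| : A ⊆ X, P(A) ≥ 1−δ }. -/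
open scoped ENNReal

/-- The smooth max entropy `H_0^δ(P) = min{log |A| : A ⊆ X finite, P(A) ≥ 1-δ}`. -/
noncomputable def smoothMaxEntropy {X : Type*} (P : X → ℝ≥0∞) (δ : ℝ) : ℝ :=
  sInf {r : ℝ | ∃ A : Finset X,
    ENNReal.ofReal (1 - δ) ≤ ∑ x ∈ A, P x ∧ r = Real.log (A.card)}

/-!
Fix `Q ∈ B^ε(P)` with `r = ∑ Q^α` and cut `Q` at the level `t` with `t^(1-α) r = ε'`.
Since `Q ≤ t^(1-α) Q^α` below `t`, the mass of `Q` below `t` is at most `ε'`, so the finite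
set `A = {Q ≥ t}` has `P(A) ≥ Q(A) ≥ 1 - ε - ε'`, while Markov's inequality gives
`|A| t^α ≤ r`. Eliminating `t` yields `ε'^α |A|^(1-α) ≤ r`, hence
`ε' exp((1-α) H_0^{ε+ε'}(P)) ≤ r`; take the infimum over `Q` and logarithms.
-/

namespace ENNReal

variable {X : Type*}

theorem tsum_subtype_le_rpow_mul_tsum_rpow {α : ℝ} (hα0 : 0 ≤ α) (hα1 : α ≤ 1)
    (Q : X → ℝ≥0∞) {t : ℝ≥0∞} (S : Set X) (hS : ∀ x ∈ S, Q x ≤ t) :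
    ∑' x : S, Q x ≤ t ^ (1 - α) * ∑' x, Q x ^ α := by
  have hpoint : ∀ x : S, Q x ≤ t ^ (1 - α) * Q x ^ α := fun x => by
    calc Q x = Q x ^ (1 - α) * Q x ^ α := by
          rw [← rpow_add_of_nonneg _ _ (by linarith) hα0, sub_add_cancel, rpow_one]
      _ ≤ t ^ (1 - α) * Q x ^ α := by gcongr; exact hS x x.2
  calc ∑' x : S, Q x ≤ ∑' x : S, t ^ (1 - α) * Q x ^ α := ENNReal.tsum_le_tsum hpoint
    _ = t ^ (1 - α) * ∑' x : S, Q x ^ α := ENNReal.tsum_mul_left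
    _ ≤ t ^ (1 - α) * ∑' x, Q x ^ α := by
          gcongr; exact tsum_comp_le_tsum_of_injective Subtype.val_injective (Q · ^ α)

theorem card_mul_rpow_le_tsum_rpow {α : ℝ} (hα : 0 ≤ α) (Q : X → ℝ≥0∞) {t : ℝ≥0∞}
    (A : Finset X) (hA : ∀ x ∈ A, t ≤ Q x) :
    A.card * t ^ α ≤ ∑' x, Q x ^ α :=
  calc (A.card : ℝ≥0∞) * t ^ α = ∑ _x ∈ A, t ^ α := by rw [Finset.sum_const, nsmul_eq_mul]
    _ ≤ ∑ x ∈ A, Q x ^ α := Finset.sum_le_sum fun x hx => rpow_le_rpow (hA x hx) hα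
    _ ≤ ∑' x, Q x ^ α := ENNReal.sum_le_tsum A

theorem finite_setOf_le_of_tsum_rpow_ne_top {α : ℝ} (hα : 0 < α) {Q : X → ℝ≥0∞}
    (hQ : ∑' x, Q x ^ α ≠ ∞) {t : ℝ≥0∞} (ht : t ≠ 0) : {x | t ≤ Q x}.Finite :=
  (finite_const_le_of_tsum_ne_top hQ (by simp [rpow_eq_zero_iff, ht, hα.not_gt])).subset
    fun _ hx => rpow_le_rpow hx hα.le

theorem mul_rpow_one_sub_le_of_mul_rpow_le {α : ℝ} (hα0 : 0 ≤ α) (hα1 : α ≤ 1)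
    {n t r e : ℝ≥0∞} (he : e ≤ 1) (hcount : n * t ^ α ≤ r) (htail : t ^ (1 - α) * r = e) :
    e * n ^ (1 - α) ≤ r := by
  have h1α : 0 ≤ 1 - α := by linarith
  calc e * n ^ (1 - α) ≤ e ^ α * n ^ (1 - α) := by
        gcongr; simpa using rpow_le_rpow_of_exponent_ge he hα1
    _ = (n * t ^ α) ^ (1 - α) * r ^ α := by
        rw [← htail, mul_rpow_of_nonneg _ _ hα0, mul_rpow_of_nonneg _ _ h1α, ← rpow_mul,
          ← rpow_mul, mul_comm (1 - α) α]
        ring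
    _ ≤ r ^ (1 - α) * r ^ α := by gcongr
    _ = r := by rw [← rpow_add_of_nonneg _ _ h1α hα0, sub_add_cancel, rpow_one]

end ENNReal

theorem EReal.coe_le_inv_mul_log_of_ofReal_exp_mul_le {c y : ℝ} (hc : 0 < c) {r : ℝ≥0∞}
    (h : ENNReal.ofReal (Real.exp (c * y)) ≤ r) :
    (y : EReal) ≤ ((c⁻¹ : ℝ) : EReal) * ENNReal.log r :=
  calc (y : EReal) = ((c⁻¹ : ℝ) : EReal) * ((c * y : ℝ) : EReal) := by
        rw [← EReal.coe_mul, inv_mul_cancel_left₀ hc.ne']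
    _ = ((c⁻¹ : ℝ) : EReal) * ENNReal.log (ENNReal.ofReal (Real.exp (c * y))) := by
        rw [ENNReal.log_ofReal_of_pos (Real.exp_pos _), Real.log_exp]
    _ ≤ ((c⁻¹ : ℝ) : EReal) * ENNReal.log r :=
        mul_le_mul_of_nonneg_left (ENNReal.log_le_log h) (by exact_mod_cast (inv_pos.2 hc).le)

section Smoothing

variable {X : Type*} {P Q : X → ℝ≥0∞}

theorem tsum_rpow_ne_zero_of_mem_smoothSet {α ε : ℝ} (hα : 0 < α) (hε : ε < 1)
    (hQ : Q ∈ smoothSet P ε) : ∑' x, Q x ^ α ≠ 0 := by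
  intro h
  have hQ0 : ∀ x, Q x = 0 := fun x =>
    ((ENNReal.rpow_eq_zero_iff_of_pos hα).1 (ENNReal.tsum_eq_zero.1 h x))
  have := hQ.2
  simp only [hQ0, tsum_zero, nonpos_iff_eq_zero, ENNReal.ofReal_eq_zero] at this
  linarith

theorem ofReal_one_sub_add_le_sum_of_mem_smoothSet {ε ε' : ℝ} (hQ : Q ∈ smoothSet P ε)
    (hε' : 0 ≤ ε') (A : Finset X)
    (htail : ∑' x : ↑((A : Set X)ᶜ), Q x ≤ ENNReal.ofReal ε') :
    ENNReal.ofReal (1 - (ε + ε')) ≤ ∑ x ∈ A, P x := by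
  have hmass : ENNReal.ofReal (1 - ε) ≤ ∑ x ∈ A, Q x + ENNReal.ofReal ε' :=
    hQ.2.trans ((ENNReal.sum_add_tsum_compl A Q).symm.le.trans (add_le_add_right htail _))
  calc ENNReal.ofReal (1 - (ε + ε')) = ENNReal.ofReal (1 - ε) - ENNReal.ofReal ε' := by
        rw [← ENNReal.ofReal_sub _ hε', sub_add_eq_sub_sub]
    _ ≤ ∑ x ∈ A, Q x := tsub_le_iff_right.2 hmass
    _ ≤ ∑ x ∈ A, P x := Finset.sum_le_sum fun x _ => hQ.1 x

theorem exp_smoothMaxEntropy_le_card {δ : ℝ} (hδ : δ < 1) {A : Finset X}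
    (hA : ENNReal.ofReal (1 - δ) ≤ ∑ x ∈ A, P x) :
    Real.exp (smoothMaxEntropy P δ) ≤ A.card := by
  have hA0 : A.Nonempty := by
    rw [Finset.nonempty_iff_ne_empty]
    rintro rfl
    simp only [Finset.sum_empty, nonpos_iff_eq_zero, ENNReal.ofReal_eq_zero] at hA
    linarith
  have hle : smoothMaxEntropy P δ ≤ Real.log A.card :=
    csInf_le ⟨0, by rintro _ ⟨B, -, rfl⟩; exact Real.log_natCast_nonneg _⟩ ⟨A, hA, rfl⟩
  calc Real.exp (smoothMaxEntropy P δ) ≤ Real.exp (Real.log A.card) := Real.exp_le_exp.2 hle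
    _ = A.card := Real.exp_log (by exact_mod_cast hA0.card_pos)

theorem ofReal_mul_exp_smoothMaxEntropy_le_tsum_rpow {α ε ε' : ℝ} (hα : α ∈ Set.Ioo (0 : ℝ) 1)
    (hε' : 0 < ε') (hε'1 : ε' ≤ 1) (hlt : ε + ε' < 1) (hQ : Q ∈ smoothSet P ε) :
    ENNReal.ofReal (ε' * Real.exp ((1 - α) * smoothMaxEntropy P (ε + ε'))) ≤
      ∑' x, Q x ^ α := by
  set r := ∑' x, Q x ^ α
  obtain hr | hr := eq_or_ne r ∞
  · simp [hr]
  have hr0 : r ≠ 0 := tsum_rpow_ne_zero_of_mem_smoothSet hα.1 (by linarith) hQ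
  have h1α : 0 < 1 - α := by linarith [hα.2]
  set t := (ENNReal.ofReal ε' / r) ^ (1 - α)⁻¹
  have htail : t ^ (1 - α) * r = ENNReal.ofReal ε' := by
    rw [ENNReal.rpow_inv_rpow h1α.ne', ENNReal.div_mul_cancel hr0 hr]
  have ht : t ≠ 0 := by
    simp [t, ENNReal.rpow_eq_zero_iff, ENNReal.div_eq_zero_iff, hr, hε', h1α, hα.2.le]
  set A := (ENNReal.finite_setOf_le_of_tsum_rpow_ne_top hα.1 hr ht).toFinset
  have hmem : ∀ x, x ∈ A ↔ t ≤ Q x := fun x => Set.Finite.mem_toFinset _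
  have hmass : ENNReal.ofReal (1 - (ε + ε')) ≤ ∑ x ∈ A, P x := by
    refine ofReal_one_sub_add_le_sum_of_mem_smoothSet hQ hε'.le A
      ((ENNReal.tsum_subtype_le_rpow_mul_tsum_rpow hα.1.le hα.2.le Q _ fun x hx => ?_).trans
        htail.le)
    simp only [Set.mem_compl_iff, Finset.mem_coe, hmem, not_le] at hx
    exact hx.le
  have hcount := ENNReal.card_mul_rpow_le_tsum_rpow hα.1.le Q A fun x hx => (hmem x).1 hx
  refine le_trans ?_ (ENNReal.mul_rpow_one_sub_le_of_mul_rpow_le hα.1.le hα.2.le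
    (ENNReal.ofReal_le_one.2 hε'1) hcount htail)
  rw [ENNReal.ofReal_mul hε'.le]
  gcongr
  calc ENNReal.ofReal (Real.exp ((1 - α) * smoothMaxEntropy P (ε + ε')))
      = ENNReal.ofReal (Real.exp (smoothMaxEntropy P (ε + ε')) ^ (1 - α)) := by
        rw [mul_comm, Real.exp_mul]
    _ ≤ ENNReal.ofReal ((A.card : ℝ) ^ (1 - α)) := by
        gcongr; exact exp_smoothMaxEntropy_le_card hlt hmass
    _ = (A.card : ℝ≥0∞) ^ (1 - α) := by
        rw [← ENNReal.ofReal_rpow_of_nonneg (by positivity) h1α.le, ENNReal.ofReal_natCast]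

end Smoothing

theorem smoothRenyi_ge_smoothMax_general {X : Type*} (P : X → ℝ≥0∞)
    (α ε ε' : ℝ) (hα : α ∈ Set.Ioo (0 : ℝ) 1)
    (hε0 : 0 ≤ ε) (hε' : 0 < ε') (hlt : ε + ε' < 1) :
    ((smoothMaxEntropy P (ε + ε') - Real.log (1 / ε') / (1 - α) : ℝ) : EReal) ≤
      smoothRenyi P ε α := by
  have h1α : 0 < 1 - α := by linarith [hα.2]
  have hexp : Real.exp ((1 - α) * (smoothMaxEntropy P (ε + ε') - Real.log (1 / ε') / (1 - α))) =
      ε' * Real.exp ((1 - α) * smoothMaxEntropy P (ε + ε')) := by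
    rw [mul_sub, mul_div_cancel₀ _ h1α.ne', Real.exp_sub,
      Real.exp_log (one_div_pos.2 hε'), div_div_eq_mul_div, div_one, mul_comm]
  refine EReal.coe_le_inv_mul_log_of_ofReal_exp_mul_le h1α (le_iInf₂ fun Q hQ => ?_)
  rw [hexp]
  exact ofReal_mul_exp_smoothMaxEntropy_le_tsum_rpow hα hε' (by linarith) hlt hQ

/-- Smoothing lower bound (corollary of Renner–Wolf, Lemma 2): for `α ∈ (0,1)`,
`ε ∈ [0,1)` and `ε' > 0` with `ε + ε' < 1`,
`H_α^ε(P) ≥ H_0^{ε+ε'}(P) - log(1/ε')/(1-α)`. -/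
theorem smoothRenyi_ge_smoothMax {X : Type*} [Countable X] (P : X → ℝ≥0∞)
    (hP : ∑' x, P x = 1) (α ε ε' : ℝ) (hα : α ∈ Set.Ioo (0 : ℝ) 1)
    (hε0 : 0 ≤ ε) (hε' : 0 < ε') (hlt : ε + ε' < 1) :
    ((smoothMaxEntropy P (ε + ε') - Real.log (1 / ε') / (1 - α) : ℝ) : EReal) ≤
      smoothRenyi P ε α :=
  smoothRenyi_ge_smoothMax_general P α ε ε' hα hε0 hε' hlt
end

section
/- Koga's converse bound: let P be a probability distribution on {1,2,3,…} sorted non-increasingly, ε ∈ [0,1), and k* the minimal integer with ∑_{i=1}^{k*} P(i) ≥ 1−ε. Then for α ∈ (0,1), H_α^ε(P) ≥ (1/(1−α)) log( ∑_{i=1}^{k*−1} P(i)^α ). -/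
/-!
Let `m = k* - 1` and weight the atoms by `w i = P (min i m) ^ (α - 1)`. Since `α < 1`,
`q ^ α ≥ q * p ^ (α - 1)` for `q ≤ p`, so `∑ Q i ^ α ≥ ∑ Q i * w i` for every `Q ≤ P`, with
equality for `P` cut down to its first `m` atoms. As `P` is non-increasing, `w` is at most `w m`
on the first `m` atoms and equal to `w m` beyond them, while `Q ∈ B^ε(P)` must place beyond them
at least the mass it removes from them (because `∑_{i<m} P i < 1 - ε`). Moving mass to larger
weights only increases the weighted sum.
-/

open scoped ENNReal

open Finset

namespace ENNReal

theorem rpow_le_rpow_of_nonpos {x y : ℝ≥0∞} {z : ℝ} (hxy : x ≤ y) (hz : z ≤ 0) :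
    y ^ z ≤ x ^ z := by
  obtain ⟨t, ht, rfl⟩ : ∃ t, 0 ≤ t ∧ z = -t := ⟨-z, by linarith, by ring⟩
  rw [rpow_neg, rpow_neg]
  exact ENNReal.inv_le_inv.2 (rpow_le_rpow hxy ht)

theorem mul_rpow_sub_one_le_rpow {q p : ℝ≥0∞} {α : ℝ} (hqp : q ≤ p) (hα : α < 1) :
    q * p ^ (α - 1) ≤ q ^ α := by
  rcases eq_or_ne q 0 with rfl | hq0
  · simp
  rcases eq_or_ne q ⊤ with rfl | hqt
  · rw [top_le_iff.1 hqp, top_rpow_of_neg (by linarith), mul_zero]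
    exact zero_le
  calc q * p ^ (α - 1) ≤ q * q ^ (α - 1) :=
        mul_le_mul_right (rpow_le_rpow_of_nonpos hqp (by linarith)) q
    _ = q ^ (1 + (α - 1)) := by rw [rpow_add _ _ hq0 hqt, rpow_one]
    _ = q ^ α := by rw [add_sub_cancel]

theorem sum_range_mul_le_tsum_mul {f g w : ℕ → ℝ≥0∞} {m : ℕ} (c : ℝ≥0∞)
    (hgf : ∀ i ∈ range m, g i ≤ f i) (hfin : ∑ i ∈ range m, f i ≠ ⊤)
    (hsum : ∑ i ∈ range m, f i ≤ ∑' i, g i)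
    (hhead : ∀ i ∈ range m, w i ≤ c) (htail : ∀ i, c ≤ w (i + m)) :
    ∑ i ∈ range m, f i * w i ≤ ∑' i, g i * w i := by
  have hg_fin : ∑ i ∈ range m, g i ≠ ⊤ := ne_top_of_le_ne_top hfin (sum_le_sum hgf)
  have hdeficit : ∑ i ∈ range m, (f i - g i) ≤ ∑' i, g (i + m) := by
    have hsplit : ∑ i ∈ range m, (f i - g i) + ∑ i ∈ range m, g i = ∑ i ∈ range m, f i := by
      rw [← sum_add_distrib]
      exact sum_congr rfl fun i hi => tsub_add_cancel_of_le (hgf i hi)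
    rw [← ENNReal.add_le_add_iff_right hg_fin, hsplit, add_comm,
      ENNReal.summable.sum_add_tsum_nat_add']
    exact hsum
  calc ∑ i ∈ range m, f i * w i
      = ∑ i ∈ range m, g i * w i + ∑ i ∈ range m, (f i - g i) * w i := by
        rw [← sum_add_distrib]
        refine sum_congr rfl fun i hi => ?_
        rw [← add_mul, add_tsub_cancel_of_le (hgf i hi)]
    _ ≤ ∑ i ∈ range m, g i * w i + ∑ i ∈ range m, (f i - g i) * c := by
        gcongr with i hi
        exact hhead i hi
    _ ≤ ∑ i ∈ range m, g i * w i + ∑' i, g (i + m) * w (i + m) := by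
        rw [← sum_mul]
        gcongr
        calc (∑ i ∈ range m, (f i - g i)) * c ≤ (∑' i, g (i + m)) * c := by gcongr
          _ = ∑' i, g (i + m) * c := ENNReal.tsum_mul_right.symm
          _ ≤ ∑' i, g (i + m) * w (i + m) := by
            gcongr with i
            exact htail i
    _ = ∑' i, g i * w i := ENNReal.summable.sum_add_tsum_nat_add'

theorem sum_range_rpow_le_tsum_rpow {P Q : ℕ → ℝ≥0∞} {m : ℕ} {α : ℝ} (hP : Antitone P)
    (hQP : ∀ i, Q i ≤ P i) (hfin : ∑ i ∈ range m, P i ≠ ⊤)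
    (hsum : ∑ i ∈ range m, P i ≤ ∑' i, Q i) (hα : α ∈ Set.Ioo (0 : ℝ) 1) :
    ∑ i ∈ range m, P i ^ α ≤ ∑' i, Q i ^ α := by
  set w : ℕ → ℝ≥0∞ := fun i => P (min i m) ^ (α - 1)
  have hα1 : α - 1 ≤ 0 := by linarith [hα.2]
  have hPw : ∀ i ∈ range m, P i ^ α = P i * w i := fun i hi => by
    have hPi : P i ≠ ⊤ := ne_top_of_le_ne_top hfin (single_le_sum (by simp) hi)
    simp only [w, min_eq_left (mem_range.1 hi).le]
    calc P i ^ α = P i ^ (1 + (α - 1)) := by rw [add_sub_cancel]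
      _ = P i * P i ^ (α - 1) := by
        rw [rpow_add_of_add_pos hPi _ _ (by linarith [hα.1]), rpow_one]
  calc ∑ i ∈ range m, P i ^ α = ∑ i ∈ range m, P i * w i := sum_congr rfl hPw
    _ ≤ ∑' i, Q i * w i := by
      refine sum_range_mul_le_tsum_mul (P m ^ (α - 1)) (fun i _ => hQP i) hfin hsum
        (fun i _ => ?_) (fun i => by simp [w])
      exact rpow_le_rpow_of_nonpos (hP (min_le_right i m)) hα1
    _ ≤ ∑' i, Q i ^ α := ENNReal.tsum_le_tsum fun i =>
      mul_rpow_sub_one_le_rpow ((hQP i).trans (hP (min_le_left i m))) hα.2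

end ENNReal

theorem koga_converse_bound_general (P : ℕ → ℝ≥0∞)
    (hmono : Antitone P) (ε α : ℝ)
    (hα : α ∈ Set.Ioo (0 : ℝ) 1) (k : ℕ)
    (hmin : ∀ j < k, ∑ i ∈ Finset.range j, P i < ENNReal.ofReal (1 - ε)) :
    (((1 - α)⁻¹ : ℝ) : EReal) *
        ENNReal.log (∑ i ∈ Finset.range (k - 1), P i ^ α) ≤
      smoothRenyi P ε α := by
  have hhead : ∑ i ∈ range (k - 1), P i ≤ ENNReal.ofReal (1 - ε) ∧
      ∑ i ∈ range (k - 1), P i ≠ ⊤ := by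
    rcases Nat.eq_zero_or_pos k with rfl | hk
    · simp
    · have h := hmin (k - 1) (by omega)
      exact ⟨h.le, h.ne_top⟩
  have hr : ∑ i ∈ range (k - 1), P i ^ α ≤ rSmooth P ε α :=
    le_iInf₂ fun Q ⟨hQP, hQsum⟩ =>
      ENNReal.sum_range_rpow_le_tsum_rpow hmono hQP hhead.2 (hhead.1.trans hQsum) hα
  have hcoef : (0 : EReal) ≤ (((1 - α)⁻¹ : ℝ) : EReal) :=
    EReal.coe_nonneg.2 (inv_nonneg.2 (by linarith [hα.2]))
  exact mul_le_mul_of_nonneg_left (ENNReal.log_monotone hr) hcoef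

/-- Koga's converse bound: for `P` on `{1,2,3,…}` (indexed here by `ℕ`, so the
paper's atoms `1,…,k*` are indices `0,…,k-1`) sorted non-increasingly,
`ε ∈ [0,1)`, `k*` minimal with `∑_{i=1}^{k*} P(i) ≥ 1-ε`, and `α ∈ (0,1)`:
`H_α^ε(P) ≥ (1/(1-α)) log ∑_{i=1}^{k*-1} P(i)^α`. -/
theorem koga_converse_bound (P : ℕ → ℝ≥0∞) (hP : ∑' i, P i = 1)
    (hmono : Antitone P) (ε α : ℝ) (hε0 : 0 ≤ ε) (hε1 : ε < 1)
    (hα : α ∈ Set.Ioo (0 : ℝ) 1) (k : ℕ)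
    (hk : ENNReal.ofReal (1 - ε) ≤ ∑ i ∈ Finset.range k, P i)
    (hmin : ∀ j < k, ∑ i ∈ Finset.range j, P i < ENNReal.ofReal (1 - ε)) :
    (((1 - α)⁻¹ : ℝ) : EReal) *
        ENNReal.log (∑ i ∈ Finset.range (k - 1), P i ^ α) ≤
      smoothRenyi P ε α :=
  koga_converse_bound_general P hmono ε α hα k hmin
end

section
/- Mixture lower deviation: let P_{X^n} = ∑_{k=1}^m α_k P_{X_k}^{⊗n} be a mixture of m i.i.d. sources with α_k > 0, ∑ α_k = 1, and entropies H(X_1) > ⋯ > H(X_m). Then for every γ > 0 there exists n_0 such that for all n ≥ n_0 and all i ∈ {1,…,m}, Pr[ (1/n) log(1/P_{X^n}(X^n)) ≥ H(X_i) − γ ] ≥ A_{i+1} − γ, where A_{i+1} = ∑_{j=1}^i α_j. -/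
open scoped ENNReal

/-- The mixture of `m` i.i.d. sources with weights `w` and per-letter
distributions `P`: `P_{X^n}(x^n) = ∑_k w_k ∏_t P_k(x_t)`. -/
noncomputable def mixProd {X : Type*} {m : ℕ} (w : Fin m → ℝ) (P : Fin m → X → ℝ≥0∞)
    (n : ℕ) (x : Fin n → X) : ℝ≥0∞ :=
  ∑ k, ENNReal.ofReal (w k) * ∏ t, P k (x t)

/-- `A_i = ∑_{j=1}^{i-1} w_j` (0-based: the total weight of the first `i`
components). -/
noncomputable def Aweight {m : ℕ} (w : Fin m → ℝ) (i : ℕ) : ℝ :=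
  ∑ k ∈ Finset.univ.filter (fun k : Fin m => (k : ℕ) < i), w k

/-!
Under the `k`-th source the per-letter log-loss `-log P_j(x_t)` of any component `j` has mean
`H(X_k) + D(P_k ‖ P_j) ≥ H(X_k)` (Gibbs). Truncated at a large level `M` it is bounded and its
mean still exceeds `H(X_k) - γ`, so Chebyshev's inequality for the i.i.d. sum shows that, with
`P_k^{⊗n}`-probability tending to one, `P_j^{⊗n}(X^n) ≤ exp(-n (H(X_k) - γ))` for every `j`.
On that event the mixture, a convex combination of the `P_j^{⊗n}`, obeys the same bound, so its
normalized log-loss is at least `H(X_k) - γ ≥ H(X_i) - γ` whenever `k ≤ i`. Weighting these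
events by `α_k` over `k ≤ i` gives probability at least `A_{i+1} (1 - γ) ≥ A_{i+1} - γ`.
-/

open MeasureTheory ProbabilityTheory Filter Topology

lemma PMF.hasSum_toReal {X : Type*} (p : PMF X) : HasSum (fun x => (p x).toReal) 1 := by
  have h := ENNReal.hasSum_toReal (p.tsum_coe ▸ ENNReal.one_ne_top)
  rwa [← ENNReal.tsum_toReal_eq p.apply_ne_top, p.tsum_coe, ENNReal.toReal_one] at h

lemma PMF.toReal_le_one {X : Type*} (p : PMF X) (x : X) : (p x).toReal ≤ 1 :=
  ENNReal.toReal_le_of_le_ofReal zero_le_one (by simpa using p.coe_le_one x)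

lemma neg_mul_log_add_sub_le {a b : ℝ} (ha : 0 ≤ a) (hb : 0 < b) :
    a * -Real.log a + a - b ≤ a * -Real.log b := by
  rcases ha.eq_or_lt with rfl | ha
  · simp [hb.le]
  have h := Real.log_le_sub_one_of_pos (div_pos hb ha)
  rw [Real.log_div hb.ne' ha.ne'] at h
  have : a * (b / a) = b := by field_simp
  nlinarith [mul_le_mul_of_nonneg_left h ha.le]

/-- The self-information `-log a` truncated at level `M`; it equals `M`, not the junk value
`-log 0 = 0`, at `a = 0`. -/
noncomputable def negLogTrunc (M a : ℝ) : ℝ := -Real.log (max a (Real.exp (-M)))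

lemma negLogTrunc_le (M a : ℝ) : negLogTrunc M a ≤ M := by
  have := Real.log_le_log (Real.exp_pos (-M)) (le_max_right a _)
  rw [Real.log_exp] at this
  unfold negLogTrunc
  linarith

lemma negLogTrunc_nonneg {M a : ℝ} (hM : 0 ≤ M) (ha : a ≤ 1) : 0 ≤ negLogTrunc M a :=
  neg_nonneg.2 <| Real.log_nonpos (lt_max_of_lt_right (Real.exp_pos _)).le <|
    max_le ha (Real.exp_le_one_iff.2 (neg_nonpos.2 hM))

lemma negLogTrunc_le_neg_log (M : ℝ) {a : ℝ} (ha : 0 < a) : negLogTrunc M a ≤ -Real.log a :=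
  neg_le_neg (Real.log_le_log ha (le_max_left _ _))

lemma sum_negLogTrunc_lt {ι : Type*} [Fintype ι] (M : ℝ) {a : ι → ℝ} {c : ℝ}
    (ha : ∀ i, 0 ≤ a i) (h : Real.exp (-c) < ∏ i, a i) : ∑ i, negLogTrunc M (a i) < c := by
  have hpos : ∀ i, 0 < a i := fun i => (ha i).lt_of_ne' fun h0 =>
    (Real.exp_pos _).not_gt (h.trans_eq (Finset.prod_eq_zero (Finset.mem_univ i) h0))
  calc ∑ i, negLogTrunc M (a i) ≤ ∑ i, -Real.log (a i) :=
        Finset.sum_le_sum fun i _ => negLogTrunc_le_neg_log M (hpos i)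
    _ = -Real.log (∏ i, a i) := by
        rw [Real.log_prod fun i _ => (hpos i).ne', Finset.sum_neg_distrib]
    _ < c := by
        have := Real.log_lt_log (Real.exp_pos _) h
        rw [Real.log_exp] at this
        linarith

lemma le_one_div_mul_log_one_div_toReal {y : ℝ≥0∞} {n c : ℝ} (hn : 0 < n) (hy : 0 < y)
    (hyc : y ≤ ENNReal.ofReal (Real.exp (-(n * c)))) :
    c ≤ 1 / n * Real.log (1 / y.toReal) := by
  have hy' : 0 < y.toReal :=
    ENNReal.toReal_pos hy.ne' (ne_top_of_le_ne_top ENNReal.ofReal_ne_top hyc)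
  have hlog := Real.log_le_log hy' (ENNReal.toReal_le_of_le_ofReal (Real.exp_pos _).le hyc)
  rw [Real.log_exp] at hlog
  rw [one_div y.toReal, Real.log_inv, one_div_mul_eq_div, le_div_iff₀ hn]
  linarith

lemma ENNReal.ofReal_sub_le_mul_one_sub {a b : ℝ} (ha : a ≤ 1) (hb : 0 ≤ b) :
    ENNReal.ofReal (a - b) ≤ ENNReal.ofReal a * (1 - ENNReal.ofReal b) := by
  rw [ENNReal.ofReal_sub _ hb, ENNReal.mul_sub fun _ _ => ENNReal.ofReal_ne_top, mul_one]
  exact tsub_le_tsub_left (mul_le_of_le_one_left' (ENNReal.ofReal_le_one.2 ha)) _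

lemma measure_pi_setOf_sum_le_le {Ω : Type*} [MeasurableSpace Ω] (μ : Measure Ω)
    [IsProbabilityMeasure μ] {g : Ω → ℝ} (hg : MemLp g 2 μ) {c : ℝ} (hc : c < μ[g])
    {n : ℕ} (hn : 0 < n) :
    Measure.pi (fun _ : Fin n => μ) {x | ∑ t, g (x t) ≤ n * c} ≤
      ENNReal.ofReal (Var[g; μ] / (μ[g] - c) ^ 2 / n) := by
  set ν := Measure.pi fun _ : Fin n => μ
  set S : (Fin n → Ω) → ℝ := fun x => ∑ t, g (x t)
  have hS : S = ∑ t, fun x => g (x t) := by ext; simp [S]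
  have hgt : ∀ t : Fin n, MemLp (fun x : Fin n → Ω => g (x t)) 2 ν :=
    fun t => hg.comp_measurePreserving (measurePreserving_eval _ t)
  have hmean : ν[S] = (n : ℝ) * μ[g] := by
    rw [integral_finsetSum _ fun t _ => (hgt t).integrable one_le_two]
    have heval : ∀ t : Fin n, ∫ x, g (x t) ∂ν = μ[g] := fun t => by
      rw [← integral_map (measurable_pi_apply t).aemeasurable
        ((measurePreserving_eval (fun _ : Fin n => μ) t).map_eq ▸ hg.aestronglyMeasurable),
        (measurePreserving_eval (fun _ : Fin n => μ) t).map_eq]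
    simp [heval]
  have hvar : Var[S; ν] = n * Var[g; μ] := by
    rw [hS, variance_sum_pi fun _ => hg]
    simp
  have hnε : (0 : ℝ) < n * (μ[g] - c) := by
    have : (0 : ℝ) < n := by exact_mod_cast hn
    nlinarith
  calc ν {x | ∑ t, g (x t) ≤ n * c}
      ≤ ν {x | n * (μ[g] - c) ≤ |S x - ν[S]|} := by
        refine measure_mono fun x (hx : S x ≤ n * c) => ?_
        rw [Set.mem_ofPred_eq, hmean, abs_sub_comm]
        exact le_abs.mpr (Or.inl (by linarith))
    _ ≤ ENNReal.ofReal (Var[S; ν] / (n * (μ[g] - c)) ^ 2) :=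
        meas_ge_le_variance_div_sq (hS ▸ memLp_finsetSum' _ fun t _ => hgt t) hnε
    _ = _ := by
        rw [hvar]
        congr 1
        field_simp

lemma tendsto_measure_pi_setOf_sum_le {Ω : Type*} [MeasurableSpace Ω] (μ : Measure Ω)
    [IsProbabilityMeasure μ] {g : Ω → ℝ} (hg : MemLp g 2 μ) {c : ℝ} (hc : c < μ[g]) :
    Tendsto (fun n : ℕ => Measure.pi (fun _ : Fin n => μ) {x | ∑ t, g (x t) ≤ n * c})
      atTop (𝓝 0) := by
  have hbound := ENNReal.tendsto_ofReal
    (tendsto_const_div_atTop_nhds_zero_nat (Var[g; μ] / (μ[g] - c) ^ 2))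
  rw [ENNReal.ofReal_zero] at hbound
  refine tendsto_of_tendsto_of_tendsto_of_le_of_le' tendsto_const_nhds hbound
    (Eventually.of_forall fun _ => zero_le) ?_
  filter_upwards [eventually_gt_atTop 0] with n hn
  exact measure_pi_setOf_sum_le_le μ hg hc hn

section Discrete

variable {X : Type*} [MeasurableSpace X] [MeasurableSingletonClass X] [Countable X]

lemma PMF.measure_pi_apply {ι : Type*} [Fintype ι] (p : PMF X) (s : Set (ι → X)) :
    Measure.pi (fun _ : ι => p.toMeasure) s = ∑' x : s, ∏ i, p ((x : ι → X) i) := by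
  rw [← Measure.tsum_indicator_apply_singleton _ s s.to_countable.measurableSet, ← tsum_subtype]
  congr with x
  simp [← Set.univ_pi_singleton, Measure.pi_pi, p.toMeasure_apply_singleton]

lemma PMF.measure_pi_setOf_prod_eq_zero {ι : Type*} [Fintype ι] (p : PMF X) :
    Measure.pi (fun _ : ι => p.toMeasure) {x | ∏ i, p (x i) = 0} = 0 := by
  rw [PMF.measure_pi_apply, ENNReal.tsum_eq_zero]
  exact fun x => x.2

lemma PMF.memLp_negLogTrunc (p q : PMF X) {M : ℝ} (hM : 0 ≤ M) (r : ℝ≥0∞) :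
    MemLp (fun x => negLogTrunc M (q x).toReal) r p.toMeasure :=
  MemLp.of_bound (measurable_of_countable _).aestronglyMeasurable M <| ae_of_all _ fun x => by
    rw [Real.norm_of_nonneg (negLogTrunc_nonneg hM (q.toReal_le_one x))]
    exact negLogTrunc_le _ _

/-- Gibbs' inequality on `F`, with `q` replaced by `max q e^{-M}`, whose mass on `F` exceeds
that of `q` by at most `#F e^{-M}`. -/
lemma PMF.sum_sub_le_integral_negLogTrunc (p q : PMF X) {M : ℝ} (hM : 0 ≤ M) (F : Finset X) :
    ∑ x ∈ F, ((p x).toReal * -Real.log (p x).toReal + (p x).toReal) -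
        (1 + F.card * Real.exp (-M)) ≤ ∫ x, negLogTrunc M (q x).toReal ∂p.toMeasure := by
  set g := fun x => negLogTrunc M (q x).toReal
  have hg0 : ∀ x, 0 ≤ g x := fun x => negLogTrunc_nonneg hM (q.toReal_le_one x)
  have hpg : Summable fun x => (p x).toReal * g x :=
    (p.hasSum_toReal.summable.mul_right M).of_nonneg_of_le
      (fun x => mul_nonneg ENNReal.toReal_nonneg (hg0 x))
      (fun x => mul_le_mul_of_nonneg_left (negLogTrunc_le _ _) ENNReal.toReal_nonneg)
  have hqF : ∑ x ∈ F, (q x).toReal ≤ 1 :=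
    (q.hasSum_toReal.summable.sum_le_tsum F fun _ _ => ENNReal.toReal_nonneg).trans_eq
      q.hasSum_toReal.tsum_eq
  have hrF : ∑ x ∈ F, max (q x).toReal (Real.exp (-M)) ≤ 1 + F.card * Real.exp (-M) := by
    calc ∑ x ∈ F, max (q x).toReal (Real.exp (-M))
        ≤ ∑ x ∈ F, ((q x).toReal + Real.exp (-M)) := Finset.sum_le_sum fun x _ =>
          max_le_add_of_nonneg ENNReal.toReal_nonneg (Real.exp_pos _).le
      _ ≤ 1 + F.card * Real.exp (-M) := by
          rw [Finset.sum_add_distrib, Finset.sum_const, nsmul_eq_mul]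
          linarith
  calc _ ≤ ∑ x ∈ F, ((p x).toReal * -Real.log (p x).toReal + (p x).toReal -
          max (q x).toReal (Real.exp (-M))) := by
        rw [Finset.sum_sub_distrib]
        linarith
    _ ≤ ∑ x ∈ F, (p x).toReal * g x := Finset.sum_le_sum fun x _ =>
        neg_mul_log_add_sub_le ENNReal.toReal_nonneg (lt_max_of_lt_right (Real.exp_pos _))
    _ ≤ ∑' x, (p x).toReal * g x :=
        hpg.sum_le_tsum F fun x _ => mul_nonneg ENNReal.toReal_nonneg (hg0 x)
    _ = ∫ x, g x ∂p.toMeasure := by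
        rw [PMF.integral_eq_tsum _ _ ((p.memLp_negLogTrunc q hM 1).integrable le_rfl)]
        rfl

lemma PMF.exists_lt_integral_negLogTrunc (p q : PMF X) {H c : ℝ}
    (hH : HasSum (fun x => (p x).toReal * -Real.log (p x).toReal) H) (hc : c < H) :
    ∃ M, 0 ≤ M ∧ c < ∫ x, negLogTrunc M (q x).toReal ∂p.toMeasure := by
  obtain ⟨c', hcc', hc'H⟩ := exists_between hc
  obtain ⟨F, hF⟩ : ∃ F : Finset X,
      c' + 1 < ∑ x ∈ F, ((p x).toReal * -Real.log (p x).toReal + (p x).toReal) :=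
    ((hH.add p.hasSum_toReal).eventually (lt_mem_nhds (by linarith))).exists
  obtain ⟨M, hM0, hM⟩ : ∃ M : ℝ, 0 ≤ M ∧ F.card * Real.exp (-M) < c' - c := by
    have := Real.tendsto_exp_neg_atTop_nhds_zero.const_mul (F.card : ℝ)
    rw [mul_zero] at this
    exact ((eventually_ge_atTop 0).and (this.eventually (gt_mem_nhds (sub_pos.2 hcc')))).exists
  exact ⟨M, hM0, by linarith [p.sum_sub_le_integral_negLogTrunc q hM0 F]⟩

lemma PMF.tendsto_measure_pi_setOf_exp_lt_prod (p q : PMF X) {H c : ℝ}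
    (hH : HasSum (fun x => (p x).toReal * -Real.log (p x).toReal) H) (hc : c < H) :
    Tendsto (fun n : ℕ => Measure.pi (fun _ : Fin n => p.toMeasure)
      {x | ENNReal.ofReal (Real.exp (-(n * c))) < ∏ t, q (x t)}) atTop (𝓝 0) := by
  obtain ⟨M, hM, hlt⟩ := p.exists_lt_integral_negLogTrunc q hH hc
  refine tendsto_of_tendsto_of_tendsto_of_le_of_le tendsto_const_nhds
    (tendsto_measure_pi_setOf_sum_le _ (p.memLp_negLogTrunc q hM 2) hlt) (fun _ => zero_le)
    fun n => measure_mono fun x hx => ?_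
  have hprod : Real.exp (-(n * c)) < ∏ t, (q (x t)).toReal := by
    rw [← ENNReal.toReal_prod]
    exact (ENNReal.ofReal_lt_iff_lt_toReal (Real.exp_pos _).le
      (ENNReal.prod_ne_top fun t _ => q.apply_ne_top _)).1 hx
  exact (sum_negLogTrunc_lt M (fun t => ENNReal.toReal_nonneg) hprod).le

lemma PMF.eventually_forall_sum_measure_pi_le {m : ℕ} (p : Fin m → PMF X) {H : Fin m → ℝ}
    (hH : ∀ k, HasSum (fun x => (p k x).toReal * -Real.log (p k x).toReal) (H k)) {γ : ℝ}
    (hγ : 0 < γ) :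
    ∀ᶠ n : ℕ in atTop, ∀ k, ∑ j, Measure.pi (fun _ : Fin n => (p k).toMeasure)
      {x | ENNReal.ofReal (Real.exp (-(n * (H k - γ)))) < ∏ t, p j (x t)} ≤ ENNReal.ofReal γ := by
  refine eventually_all.2 fun k => ?_
  have := tendsto_finsetSum Finset.univ fun j _ =>
    (p k).tendsto_measure_pi_setOf_exp_lt_prod (p j) (hH k) (sub_lt_self _ hγ)
  rw [Finset.sum_const_zero] at this
  exact this.eventually (ge_mem_nhds (ENNReal.ofReal_pos.2 hγ))

end Discrete

section Mixture

variable {X : Type*} {m : ℕ} {w : Fin m → ℝ}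

lemma mixProd_le_of_forall_prod_le (hw : ∀ k, 0 ≤ w k) (hw1 : ∑ k, w k = 1)
    {P : Fin m → X → ℝ≥0∞} {n : ℕ} {x : Fin n → X} {b : ℝ≥0∞}
    (h : ∀ k, ∏ t, P k (x t) ≤ b) : mixProd w P n x ≤ b :=
  calc mixProd w P n x ≤ ∑ k, ENNReal.ofReal (w k) * b :=
        Finset.sum_le_sum fun k _ => mul_le_mul_right (h k) _
    _ = b := by
        rw [← Finset.sum_mul, ← ENNReal.ofReal_sum_of_nonneg fun k _ => hw k, hw1,
          ENNReal.ofReal_one, one_mul]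

lemma mixProd_pos {P : Fin m → X → ℝ≥0∞} {n : ℕ} {x : Fin n → X} {k : Fin m} (hk : 0 < w k)
    (h : 0 < ∏ t, P k (x t)) : 0 < mixProd w P n x :=
  (ENNReal.mul_pos (ENNReal.ofReal_pos.2 hk).ne' h.ne').trans_le <|
    Finset.single_le_sum (f := fun j => ENNReal.ofReal (w j) * ∏ t, P j (x t))
      (fun _ _ => zero_le) (Finset.mem_univ k)

lemma Aweight_le_one (hw : ∀ k, 0 ≤ w k) (hw1 : ∑ k, w k = 1) (i : ℕ) : Aweight w i ≤ 1 :=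
  hw1 ▸ Finset.sum_le_sum_of_subset_of_nonneg (Finset.filter_subset _ _) fun k _ _ => hw k

variable [MeasurableSpace X] [MeasurableSingletonClass X] [Countable X]

lemma tsum_mixProd_eq_sum_measure_pi (p : Fin m → PMF X) (n : ℕ) (s : Set (Fin n → X)) :
    ∑' x : s, mixProd w (fun k => p k) n x =
      ∑ k, ENNReal.ofReal (w k) * Measure.pi (fun _ => (p k).toMeasure) s := by
  simp only [mixProd, PMF.measure_pi_apply, ← ENNReal.tsum_mul_left]
  exact Summable.tsum_finsetSum fun _ _ => ENNReal.summable

lemma one_sub_sum_le_measure_pi_le_log_mixProd (hw : ∀ k, 0 ≤ w k) (hw1 : ∑ k, w k = 1)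
    (p : Fin m → PMF X) {k : Fin m} (hk : 0 < w k) {n : ℕ} (hn : 0 < n) (c : ℝ) :
    1 - ∑ j, Measure.pi (fun _ : Fin n => (p k).toMeasure)
        {x | ENNReal.ofReal (Real.exp (-(n * c))) < ∏ t, p j (x t)} ≤
      Measure.pi (fun _ : Fin n => (p k).toMeasure)
        {x | c ≤ 1 / n * Real.log (1 / (mixProd w (fun j => p j) n x).toReal)} := by
  set μ := Measure.pi fun _ : Fin n => (p k).toMeasure
  set good := {x : Fin n → X | ∀ j, ∏ t, p j (x t) ≤ ENNReal.ofReal (Real.exp (-(n * c)))}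
  have hbad : μ goodᶜ ≤
      ∑ j, μ {x | ENNReal.ofReal (Real.exp (-(n * c))) < ∏ t, p j (x t)} := by
    have : goodᶜ = ⋃ j, {x | ENNReal.ofReal (Real.exp (-(n * c))) < ∏ t, p j (x t)} := by
      ext x
      simp [good]
    exact this ▸ measure_iUnion_fintype_le μ _
  have hgood : good ≤ᵐ[μ]
      {x | c ≤ 1 / n * Real.log (1 / (mixProd w (fun j => p j) n x).toReal)} := by
    refine ae_le_set.2 (measure_mono_null (fun x hx => ?_) (p k).measure_pi_setOf_prod_eq_zero)
    by_contra h
    exact hx.2 (le_one_div_mul_log_one_div_toReal (by exact_mod_cast hn)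
      (mixProd_pos hk (pos_iff_ne_zero.2 h)) (mixProd_le_of_forall_prod_le hw hw1 hx.1))
  calc _ ≤ 1 - μ goodᶜ := tsub_le_tsub_left hbad _
    _ ≤ μ good := by
        rw [tsub_le_iff_right, ← measure_univ (μ := μ)]
        exact measure_univ_le_add_compl good
    _ ≤ _ := measure_mono_ae hgood

lemma ofReal_Aweight_sub_le_tsum_mixProd (hw : ∀ k, 0 < w k) (hw1 : ∑ k, w k = 1)
    {H : Fin m → ℝ} (hH : Antitone H) (p : Fin m → PMF X) {n : ℕ} (hn : 0 < n) {γ : ℝ}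
    (hγ : 0 ≤ γ) (hbad : ∀ k, ∑ j, Measure.pi (fun _ : Fin n => (p k).toMeasure)
      {x | ENNReal.ofReal (Real.exp (-(n * (H k - γ)))) < ∏ t, p j (x t)} ≤ ENNReal.ofReal γ)
    (i : Fin m) :
    ENNReal.ofReal (Aweight w ((i : ℕ) + 1) - γ) ≤
      ∑' x : {y | H i - γ ≤ 1 / (n : ℝ) * Real.log (1 / (mixProd w (fun k => p k) n y).toReal)},
        mixProd w (fun k => p k) n x := by
  set E := {y | H i - γ ≤ 1 / (n : ℝ) * Real.log (1 / (mixProd w (fun k => p k) n y).toReal)}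
  set K := Finset.univ.filter fun k : Fin m => (k : ℕ) < i + 1
  have hK : ∀ k ∈ K, 1 - ENNReal.ofReal γ ≤ Measure.pi (fun _ => (p k).toMeasure) E := by
    intro k hk
    have hki : H i - γ ≤ H k - γ :=
      sub_le_sub_right (hH (Fin.le_def.2 (by simpa [K, Nat.lt_succ_iff] using hk))) _
    calc 1 - ENNReal.ofReal γ ≤ _ := tsub_le_tsub_left (hbad k) _
      _ ≤ _ := one_sub_sum_le_measure_pi_le_log_mixProd (fun k => (hw k).le) hw1 p (hw k) hn _
      _ ≤ _ := measure_mono fun x hx => hki.trans hx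
  calc ENNReal.ofReal (Aweight w ((i : ℕ) + 1) - γ)
      ≤ ENNReal.ofReal (Aweight w ((i : ℕ) + 1)) * (1 - ENNReal.ofReal γ) :=
        ENNReal.ofReal_sub_le_mul_one_sub (Aweight_le_one (fun k => (hw k).le) hw1 _) hγ
    _ = ∑ k ∈ K, ENNReal.ofReal (w k) * (1 - ENNReal.ofReal γ) := by
        rw [Aweight, ENNReal.ofReal_sum_of_nonneg fun k _ => (hw k).le, Finset.sum_mul]
    _ ≤ ∑ k ∈ K, ENNReal.ofReal (w k) * Measure.pi (fun _ => (p k).toMeasure) E :=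
        Finset.sum_le_sum fun k hk => mul_le_mul_right (hK k hk) _
    _ ≤ ∑ k, ENNReal.ofReal (w k) * Measure.pi (fun _ => (p k).toMeasure) E :=
        Finset.sum_le_sum_of_subset (Finset.filter_subset _ _)
    _ = _ := (tsum_mixProd_eq_sum_measure_pi p n E).symm

end Mixture

/-- Mixture lower deviation: for a mixture of `m` i.i.d. sources with positive
weights and strictly decreasing (finite) entropies, for every `γ > 0` there is
`n₀` such that for all `n ≥ n₀` and components `i`,
`Pr[(1/n) log(1/P_{X^n}(X^n)) ≥ H(X_i) - γ] ≥ A_{i+1} - γ`. -/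
theorem mixture_lower_deviation {X : Type*} [Countable X] {m : ℕ}
    (w : Fin m → ℝ) (P : Fin m → X → ℝ≥0∞) (H : Fin m → ℝ)
    (hw : ∀ k, 0 < w k) (hw1 : ∑ k, w k = 1)
    (hP : ∀ k, ∑' x, P k x = 1)
    (hH : ∀ k, HasSum (fun x => (P k x).toReal * Real.log (1 / (P k x).toReal)) (H k))
    (hanti : StrictAnti H) (γ : ℝ) (hγ : 0 < γ) :
    ∃ n₀ : ℕ, ∀ n ≥ n₀, ∀ i : Fin m,
      ENNReal.ofReal (Aweight w ((i : ℕ) + 1) - γ) ≤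
        ∑' x : {y : Fin n → X //
            H i - γ ≤ (1 / (n : ℝ)) * Real.log (1 / (mixProd w P n y).toReal)},
          mixProd w P n (x : Fin n → X) := by
  let : MeasurableSpace X := ⊤
  have : MeasurableSingletonClass X := ⟨fun _ => trivial⟩
  obtain ⟨p, rfl⟩ : ∃ p : Fin m → PMF X, (fun k => ⇑(p k)) = P :=
    ⟨fun k => ⟨P k, hP k ▸ ENNReal.summable.hasSum⟩, rfl⟩
  have hp : ∀ k, HasSum (fun x => (p k x).toReal * -Real.log (p k x).toReal) (H k) := fun k => by
    simpa only [one_div, Real.log_inv] using hH k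
  obtain ⟨n₀, hn₀⟩ := eventually_atTop.1
    ((PMF.eventually_forall_sum_measure_pi_le p hp hγ).and (eventually_gt_atTop 0))
  refine ⟨n₀, fun n hn i => ?_⟩
  obtain ⟨hbad, hn⟩ := hn₀ n hn
  exact ofReal_Aweight_sub_le_tsum_mixProd hw hw1 hanti.antitone p hn hγ.le hbad i
end

section
/- Mixture upper deviation: under the same mixture setup, for every γ > 0 there exists n_0 such that for all n ≥ n_0 and all i ∈ {1,…,m}, Pr[ (1/n) log(1/P_{X^n}(X^n)) ≤ H(X_i) + γ ] ≥ 1 − A_i − γ, where A_i = ∑_{j=1}^{i−1} α_j. -/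
/-!
For `k ≥ i` the `k`-th component puts, for large `n`, mass at least `1 - γ` on its typical set
`{y | P_k^n(y) ≥ exp (-n (H_k + γ/2))}`: this is the AEP, which follows from the strong law of
large numbers for the surprisal `log (1 / P_k(x))` on the infinite product space. Since
`P_{X^n} ≥ w_k P_k^n`, on that typical set `-(1/n) log P_{X^n} ≤ log (1 / w_k) / n + H_k + γ/2`,
which is at most `H_k + γ ≤ H_i + γ` for large `n`. Summing over `k ≥ i` bounds the probability
of the event below by `(1 - A_i)(1 - γ) ≥ 1 - A_i - γ`.
-/

open scoped ENNReal

open MeasureTheory ProbabilityTheory Filter Topology Finset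

section TypicalSet

variable {X : Type*}

noncomputable def PMF.surprisal (p : PMF X) (x : X) : ℝ := Real.log (1 / (p x).toReal)

/-- Stated multiplicatively, so that sequences of probability zero, where the logarithm would take
a junk value, are excluded. -/
def typicalSet (q : X → ℝ≥0∞) (n : ℕ) (r : ℝ) : Set (Fin n → X) :=
  {y | ENNReal.ofReal (Real.exp (-(n * r))) ≤ ∏ t, q (y t)}

theorem PMF.surprisal_nonneg (p : PMF X) (x : X) : 0 ≤ p.surprisal x := by
  rw [surprisal, one_div, Real.log_inv, neg_nonneg]
  exact Real.log_nonpos ENNReal.toReal_nonneg (ENNReal.toReal_le_of_le_ofReal zero_le_one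
    (by simpa using p.coe_le_one x))

theorem PMF.ofReal_exp_neg_le_prod {ι : Type*} [Fintype ι] (p : PMF X) {y : ι → X}
    (hy : ∀ t, p (y t) ≠ 0) {c : ℝ} (hc : ∑ t, p.surprisal (y t) ≤ c) :
    ENNReal.ofReal (Real.exp (-c)) ≤ ∏ t, p (y t) := by
  have hpos : ∀ t, 0 < (p (y t)).toReal := fun t => ENNReal.toReal_pos (hy t) (p.apply_ne_top _)
  have hprod : ∏ t, p (y t) = ENNReal.ofReal (Real.exp (-∑ t, p.surprisal (y t))) := by
    simp only [surprisal, one_div, Real.log_inv, Finset.sum_neg_distrib, neg_neg, Real.exp_sum,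
      fun t => Real.exp_log (hpos t)]
    rw [ENNReal.ofReal_prod_of_nonneg fun t _ => (hpos t).le]
    simp [ENNReal.ofReal_toReal (p.apply_ne_top _)]
  rw [hprod]
  gcongr

variable [MeasurableSpace X] [MeasurableSingletonClass X] [Countable X]

theorem PMF.toMeasure_eq_sum_dirac (p : PMF X) :
    p.toMeasure = Measure.sum fun x => p x • Measure.dirac x := by
  conv_lhs => rw [← Measure.sum_smul_dirac p.toMeasure]
  simp only [p.toMeasure_apply_singleton _ (measurableSet_singleton _)]

theorem PMF.integrable_surprisal (p : PMF X) {H : ℝ}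
    (hH : HasSum (fun x => (p x).toReal * p.surprisal x) H) :
    Integrable p.surprisal p.toMeasure := by
  rw [p.toMeasure_eq_sum_dirac, integrable_sum_dirac_iff p.apply_ne_top]
  simpa [Real.norm_of_nonneg (p.surprisal_nonneg _)] using hH.summable

theorem PMF.ae_ne_zero (p : PMF X) : ∀ᵐ x ∂p.toMeasure, p x ≠ 0 := by
  rw [ae_iff, p.toMeasure_apply_eq_zero_iff (Set.to_countable _).measurableSet]
  exact Set.disjoint_left.2 fun x hx h => hx (by simpa using h)

theorem PMF.ae_tendsto_avg_surprisal (p : PMF X) {H : ℝ}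
    (hH : HasSum (fun x => (p x).toReal * p.surprisal x) H) :
    ∀ᵐ ω ∂(Measure.infinitePi fun _ : ℕ => p.toMeasure),
      Tendsto (fun n : ℕ => (n : ℝ)⁻¹ * ∑ i ∈ range n, p.surprisal (ω i)) atTop (𝓝 H) := by
  set ν := Measure.infinitePi fun _ : ℕ => p.toMeasure
  have hint := p.integrable_surprisal hH
  have hg : Measurable p.surprisal := measurable_of_countable _
  have heval := measurePreserving_eval_infinitePi (fun _ : ℕ => p.toMeasure)
  have hident : ∀ i, IdentDistrib (fun ω : ℕ → X => p.surprisal (ω i)) p.surprisal ν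
      p.toMeasure := fun i =>
    (show IdentDistrib (Function.eval i) id ν p.toMeasure from
      ⟨(heval i).measurable.aemeasurable, aemeasurable_id, by
        rw [(heval i).map_eq, Measure.map_id]⟩).comp hg
  have hindep : Pairwise fun i j => IndepFun (fun ω : ℕ → X => p.surprisal (ω i))
      (fun ω => p.surprisal (ω j)) ν :=
    fun i j hij => (iIndepFun_infinitePi (fun _ => hg)).indepFun hij
  have hlaw := strong_law_ae (Ω := ℕ → X) (μ := ν) (fun i ω => p.surprisal (ω i))
    ((hident 0).integrable_iff.2 hint) hindep fun i => (hident i).trans (hident 0).symm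
  rwa [(hident 0).integral_eq, p.integral_eq_tsum _ hint, tsum_congr fun _ => smul_eq_mul _ _,
    hH.tsum_eq] at hlaw

theorem PMF.ae_forall_ne_zero (p : PMF X) :
    ∀ᵐ ω ∂(Measure.infinitePi fun _ : ℕ => p.toMeasure), ∀ i, p (ω i) ≠ 0 :=
  ae_all_iff.2 fun i =>
    (measurePreserving_eval_infinitePi (fun _ : ℕ => p.toMeasure) i).quasiMeasurePreserving.ae
      (p := fun x => p x ≠ 0) p.ae_ne_zero

theorem PMF.tendsto_pi_typicalSet (p : PMF X) {H δ : ℝ}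
    (hH : HasSum (fun x => (p x).toReal * p.surprisal x) H) (hδ : 0 < δ) :
    Tendsto (fun n => Measure.pi (fun _ : Fin n => p.toMeasure) (typicalSet p n (H + δ)))
      atTop (𝓝 1) := by
  set ν := Measure.infinitePi fun _ : ℕ => p.toMeasure
  have hmarg : ∀ n, ν.map (fun ω (t : Fin n) => ω t) = Measure.pi fun _ => p.toMeasure :=
    fun n => by rw [Measure.map_infinitePi_infinitePi_of_inj Fin.val_injective,
      Measure.infinitePi_eq_pi (ι := Fin n)]
  have hrestr : ∀ n, Measurable fun (ω : ℕ → X) (t : Fin n) => ω t := fun n => by fun_prop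
  have hmeas : ∀ n, MeasurableSet (typicalSet p n (H + δ)) := fun n =>
    (Set.to_countable _).measurableSet
  simp_rw [← hmarg, Measure.map_apply (hrestr _) (hmeas _), ← measure_univ (μ := ν)]
  refine tendsto_measure_of_ae_tendsto_indicator_of_isFiniteMeasure atTop MeasurableSet.univ
    (fun n => hrestr n (hmeas n)) ?_
  filter_upwards [p.ae_tendsto_avg_surprisal hH, p.ae_forall_ne_zero] with ω hlim hpos
  filter_upwards [hlim.eventually (gt_mem_nhds (lt_add_of_pos_right H hδ)),
    eventually_gt_atTop 0] with n hn hn0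
  simp only [Set.mem_preimage, Set.mem_univ, iff_true]
  refine p.ofReal_exp_neg_le_prod (y := fun t : Fin n => ω t) (fun t => hpos t) ?_
  rw [Fin.sum_univ_eq_sum_range (fun i => p.surprisal (ω i))]
  rw [inv_mul_lt_iff₀ (by exact_mod_cast hn0)] at hn
  exact hn.le

theorem PMF.pi_toMeasure_apply_eq_tsum (p : PMF X) {n : ℕ} (S : Set (Fin n → X)) :
    Measure.pi (fun _ : Fin n => p.toMeasure) S = ∑' y : S, ∏ t, p ((y : Fin n → X) t) := by
  rw [← Measure.tsum_indicator_apply_singleton _ S (Set.to_countable S).measurableSet,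
    _root_.tsum_subtype S fun y => ∏ t, p (y t)]
  simp [p.toMeasure_apply_singleton]

end TypicalSet

theorem PMF.tendsto_tsum_typicalSet {X : Type*} [Countable X] (p : PMF X) {H δ : ℝ}
    (hH : HasSum (fun x => (p x).toReal * p.surprisal x) H) (hδ : 0 < δ) :
    Tendsto (fun n => ∑' y : typicalSet p n (H + δ), ∏ t, p ((y : Fin n → X) t))
      atTop (𝓝 1) := by
  let : MeasurableSpace X := ⊤
  have : DiscreteMeasurableSpace X := ⟨fun _ => trivial⟩
  simpa only [PMF.pi_toMeasure_apply_eq_tsum] using PMF.tendsto_pi_typicalSet p hH hδ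

theorem ENNReal.ofReal_sub_le_ofReal_mul_one_sub {a γ : ℝ} (ha : a ≤ 1) (hγ : 0 ≤ γ) :
    ENNReal.ofReal (a - γ) ≤ ENNReal.ofReal a * (1 - ENNReal.ofReal γ) := by
  rcases le_total γ 1 with hγ1 | hγ1
  · rw [← ENNReal.ofReal_one, ← ENNReal.ofReal_sub _ hγ, ← ENNReal.ofReal_mul' (by linarith)]
    exact ENNReal.ofReal_le_ofReal (by nlinarith)
  · simp [ENNReal.ofReal_eq_zero.2 (by linarith : a - γ ≤ 0)]

section Mixture

variable {X : Type*} {m : ℕ}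

theorem tsum_subtype_mixProd (w : Fin m → ℝ) (P : Fin m → X → ℝ≥0∞) {n : ℕ}
    (S : Set (Fin n → X)) :
    ∑' y : S, mixProd w P n y =
      ∑ k, ENNReal.ofReal (w k) * ∑' y : S, ∏ t, P k ((y : Fin n → X) t) := by
  simp only [mixProd, ← ENNReal.tsum_mul_left]
  exact Summable.tsum_finsetSum fun _ _ => ENNReal.summable

theorem eventually_typicalSet_subset {w : Fin m → ℝ} {P : Fin m → X → ℝ≥0∞}
    (hP : ∀ j x, P j x ≠ ∞) {k : Fin m} (hwk : 0 < w k) (r : ℝ) {γ : ℝ} (hγ : 0 < γ) :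
    ∀ᶠ n : ℕ in atTop, typicalSet (P k) n r ⊆
      {y | (1 / (n : ℝ)) * Real.log (1 / (mixProd w P n y).toReal) ≤ r + γ} := by
  have hsmall : ∀ᶠ n : ℕ in atTop, Real.log (1 / w k) / n < γ :=
    (tendsto_const_div_atTop_nhds_zero_nat _).eventually (gt_mem_nhds hγ)
  filter_upwards [hsmall, eventually_gt_atTop 0] with n hn hn0 y hy
  have hmix_ne_top : mixProd w P n y ≠ ∞ :=
    ENNReal.sum_ne_top.2 fun j _ => ENNReal.mul_ne_top ENNReal.ofReal_ne_top
      (ENNReal.prod_ne_top fun t _ => hP j _)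
  have hlower : w k * Real.exp (-(n * r)) ≤ (mixProd w P n y).toReal := by
    refine (ENNReal.ofReal_le_iff_le_toReal hmix_ne_top).1 ?_
    calc ENNReal.ofReal (w k * Real.exp (-(n * r)))
        = ENNReal.ofReal (w k) * ENNReal.ofReal (Real.exp (-(n * r))) :=
          ENNReal.ofReal_mul hwk.le
      _ ≤ ENNReal.ofReal (w k) * ∏ t, P k (y t) := by gcongr; exact hy
      _ ≤ mixProd w P n y :=
          Finset.single_le_sum (f := fun j => ENNReal.ofReal (w j) * ∏ t, P j (y t))
            (fun _ _ => zero_le) (Finset.mem_univ k)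
  have hlog : Real.log (1 / (mixProd w P n y).toReal) ≤ Real.log (1 / w k) + n * r := by
    have := Real.log_le_log (by positivity) hlower
    rw [Real.log_mul hwk.ne' (Real.exp_pos _).ne', Real.log_exp] at this
    simp only [one_div, Real.log_inv]
    linarith
  calc (1 / (n : ℝ)) * Real.log (1 / (mixProd w P n y).toReal)
      ≤ (1 / (n : ℝ)) * (Real.log (1 / w k) + n * r) := by gcongr
    _ = Real.log (1 / w k) / n + r := by field_simp
    _ ≤ r + γ := by linarith

theorem sum_filter_not_lt_eq_one_sub_Aweight {w : Fin m → ℝ} (hw1 : ∑ k, w k = 1) (i : ℕ) :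
    ∑ k ∈ univ.filter (fun k : Fin m => ¬ (k : ℕ) < i), w k = 1 - Aweight w i := by
  rw [← hw1, Aweight, ← Finset.sum_filter_add_sum_filter_not univ (fun k : Fin m => (k : ℕ) < i)]
  ring

theorem ofReal_one_sub_Aweight_sub_le {w : Fin m → ℝ} (hw : ∀ k, 0 ≤ w k) (hw1 : ∑ k, w k = 1)
    (i : ℕ) {γ : ℝ} (hγ : 0 ≤ γ) :
    ENNReal.ofReal (1 - Aweight w i - γ) ≤
      ∑ k ∈ univ.filter (fun k : Fin m => ¬ (k : ℕ) < i),
        ENNReal.ofReal (w k) * (1 - ENNReal.ofReal γ) := by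
  rw [← Finset.sum_mul, ← ENNReal.ofReal_sum_of_nonneg fun k _ => hw k,
    sum_filter_not_lt_eq_one_sub_Aweight hw1]
  have hA : 0 ≤ Aweight w i := Finset.sum_nonneg fun k _ => hw k
  exact ENNReal.ofReal_sub_le_ofReal_mul_one_sub (by linarith) hγ

end Mixture

/-- Mixture upper deviation: for a mixture of `m` i.i.d. sources with positive
weights and strictly decreasing (finite) entropies, for every `γ > 0` there is
`n₀` such that for all `n ≥ n₀` and components `i`,
`Pr[(1/n) log(1/P_{X^n}(X^n)) ≤ H(X_i) + γ] ≥ 1 - A_i - γ`. -/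
theorem mixture_upper_deviation {X : Type*} [Countable X] {m : ℕ}
    (w : Fin m → ℝ) (P : Fin m → X → ℝ≥0∞) (H : Fin m → ℝ)
    (hw : ∀ k, 0 < w k) (hw1 : ∑ k, w k = 1)
    (hP : ∀ k, ∑' x, P k x = 1)
    (hH : ∀ k, HasSum (fun x => (P k x).toReal * Real.log (1 / (P k x).toReal)) (H k))
    (hanti : StrictAnti H) (γ : ℝ) (hγ : 0 < γ) :
    ∃ n₀ : ℕ, ∀ n ≥ n₀, ∀ i : Fin m,
      ENNReal.ofReal (1 - Aweight w (i : ℕ) - γ) ≤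
        ∑' x : {y : Fin n → X //
            (1 / (n : ℝ)) * Real.log (1 / (mixProd w P n y).toReal) ≤ H i + γ},
          mixProd w P n (x : Fin n → X) := by
  let p : Fin m → PMF X := fun k => ⟨P k, hP k ▸ ENNReal.summable.hasSum⟩
  have htyp : ∀ k, ∀ᶠ n in atTop, 1 - ENNReal.ofReal γ ≤
      ∑' y : typicalSet (P k) n (H k + γ / 2), ∏ t, P k ((y : Fin n → X) t) := fun k =>
    ((p k).tendsto_tsum_typicalSet (hH k) (half_pos hγ)).eventually_const_le
      (ENNReal.sub_lt_self ENNReal.one_ne_top one_ne_zero (ENNReal.ofReal_pos.2 hγ).ne')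
  have hsub := fun k => eventually_typicalSet_subset (P := P) (fun j => (p j).apply_ne_top) (hw k)
    (H k + γ / 2) (half_pos hγ)
  obtain ⟨n₀, hn₀⟩ := eventually_atTop.1 ((eventually_all.2 htyp).and (eventually_all.2 hsub))
  refine ⟨n₀, fun n hn i => ?_⟩
  obtain ⟨htyp, hsub⟩ := hn₀ n hn
  refine le_trans ?_ (tsum_subtype_mixProd w P
    {y | (1 / (n : ℝ)) * Real.log (1 / (mixProd w P n y).toReal) ≤ H i + γ}).ge
  calc ENNReal.ofReal (1 - Aweight w i - γ)
      ≤ ∑ k ∈ univ.filter (fun k : Fin m => ¬ (k : ℕ) < i),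
          ENNReal.ofReal (w k) * (1 - ENNReal.ofReal γ) :=
        ofReal_one_sub_Aweight_sub_le (fun k => (hw k).le) hw1 i hγ.le
    _ ≤ ∑ k ∈ univ.filter (fun k : Fin m => ¬ (k : ℕ) < i), ENNReal.ofReal (w k) *
          ∑' y : {y | (1 / (n : ℝ)) * Real.log (1 / (mixProd w P n y).toReal) ≤ H i + γ},
            ∏ t, P k ((y : Fin n → X) t) := by
        gcongr with k hk
        refine (htyp k).trans (ENNReal.tsum_mono_subtype (fun y => ∏ t, P k (y t))
          ((hsub k).trans fun y hy => ?_))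
        have : H k ≤ H i := hanti.antitone (Fin.le_def.2 (not_lt.1 (mem_filter.1 hk).2))
        simp only [Set.mem_ofPred_eq] at hy ⊢
        linarith
    _ ≤ _ := Finset.sum_le_sum_of_subset (filter_subset _ _)
end

section
/- Information spectrum of a mixture concentrates on component entropies: under the mixture setup with H(X_j) − γ > H(X_{j+1}) + γ for all j, for all sufficiently large n and each i, α_i − 2γ ≤ Pr[ |(1/n) log(1/P_{X^n}(X^n)) − H(X_i)| ≤ γ ] ≤ α_i + 2γ. -/
/-!
Under the `k`-th component `P_k^⊗n`, the information rate `(1/n) log (1/P_{X^n})` of the mixture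
is close to `H(X_k)` with high probability. It cannot be much larger, since
`P_{X^n} ≥ α_k P_k^⊗n` and `(1/n) log (1/P_k^⊗n)` concentrates at `H(X_k)` by the law of large
numbers for the self-information `log (1/P_k)`. It cannot be much smaller, since the set where
`P_k^⊗n ≤ e^{-nγ/2} P_{X^n}` has `P_k^⊗n`-mass at most `e^{-nγ/2}`. The windows of width `γ`
around the entropies are disjoint, so the window around `H(X_i)` carries `P_{X^n}`-mass `α_i`
up to `γ`.
-/

open scoped ENNReal

open MeasureTheory ProbabilityTheory Filter Topology Function

theorem tsum_subtype_le_of_ne_zero {α : Type*} {f : α → ℝ≥0∞} {s t : Set α}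
    (h : ∀ x ∈ s, f x ≠ 0 → x ∈ t) : ∑' x : s, f x ≤ ∑' x : t, f x := by
  rw [tsum_subtype, tsum_subtype]
  refine ENNReal.tsum_le_tsum fun x => ?_
  by_cases hx : x ∈ s <;> by_cases hfx : f x = 0 <;> simp_all

theorem tsum_subtype_le_mul_tsum {α : Type*} (f g : α → ℝ≥0∞) (c : ℝ≥0∞) :
    ∑' x : {x // f x ≤ c * g x}, f x ≤ c * ∑' x, g x :=
  calc ∑' x : {x // f x ≤ c * g x}, f x ≤ ∑' x : {x // f x ≤ c * g x}, c * g x :=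
        ENNReal.tsum_le_tsum fun x => x.2
    _ = c * ∑' x : {x // f x ≤ c * g x}, g x := ENNReal.tsum_mul_left
    _ ≤ c * ∑' x, g x := by
        gcongr; exact ENNReal.tsum_comp_le_tsum_of_injective Subtype.val_injective g

theorem measure_pi_eq_tsum_prod {X : Type*} [MeasurableSpace X] [MeasurableSingletonClass X]
    [Countable X] (μ : Measure X) [SigmaFinite μ] {n : ℕ} (S : Set (Fin n → X)) :
    Measure.pi (fun _ => μ) S = ∑' x : S, ∏ t, μ {(x : Fin n → X) t} := by
  rw [← Measure.tsum_indicator_apply_singleton _ S (Set.to_countable S).measurableSet,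
    ← tsum_subtype]
  simp only [Measure.pi_singleton]

theorem weak_law_measure_pi {X : Type*} [MeasurableSpace X] (μ : Measure X)
    [IsProbabilityMeasure μ] {f : X → ℝ} (hfm : Measurable f) (hfi : Integrable f μ)
    {δ : ℝ} (hδ : 0 < δ) :
    Tendsto (fun n : ℕ => Measure.pi (fun _ : Fin n => μ)
      {x | δ ≤ |(n : ℝ)⁻¹ * ∑ t, f (x t) - ∫ y, f y ∂μ|}) atTop (𝓝 0) := by
  set ν := Measure.infinitePi fun _ : ℕ => μ
  have hcoord (i : ℕ) : MeasurePreserving (fun ω : ℕ → X => ω i) ν μ :=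
    measurePreserving_eval_infinitePi _ i
  have hY (i : ℕ) : Measurable fun ω : ℕ → X => f (ω i) := hfm.comp (measurable_pi_apply i)
  have hlaw (i : ℕ) : ν.map (fun ω => f (ω i)) = μ.map f := by
    rw [← (hcoord i).map_eq, Measure.map_map hfm (hcoord i).measurable]
    rfl
  have hint : Integrable (fun ω : ℕ → X => f (ω 0)) ν :=
    (hcoord 0).integrable_comp_of_integrable hfi
  have hindep : Pairwise ((· ⟂ᵢ[ν] ·) on fun i (ω : ℕ → X) => f (ω i)) :=
    fun i j hij => (iIndepFun_infinitePi (X := fun _ => f) fun _ => hfm).indepFun hij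
  have hident (i : ℕ) : IdentDistrib (fun ω : ℕ → X => f (ω i)) (fun ω => f (ω 0)) ν ν :=
    ⟨(hY i).aemeasurable, (hY 0).aemeasurable, by rw [hlaw, hlaw]⟩
  have hmean : ∫ ω, f (ω 0) ∂ν = ∫ y, f y ∂μ := by
    rw [← (hcoord 0).map_eq, integral_map (hcoord 0).measurable.aemeasurable
      hfm.aestronglyMeasurable]
  have hconv := tendstoInMeasure_iff_dist.1 <| tendstoInMeasure_of_tendsto_ae
    (fun n => (Finset.measurable_sum _ fun i _ => hY i).aestronglyMeasurable.const_smul _)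
    (strong_law_ae _ hint hindep hident)
  refine (hconv δ hδ).congr fun n => ?_
  have hmap : ν.map (fun ω (t : Fin n) => ω t) = Measure.pi fun _ => μ := by
    rw [Measure.map_infinitePi_infinitePi_of_inj Fin.val_injective, Measure.infinitePi_eq_pi]
  rw [← hmap, Measure.map_apply (by fun_prop) (measurableSet_le measurable_const (by fun_prop))]
  simp only [Set.preimage_ofPred_eq, Pi.smul_apply, smul_eq_mul, Real.dist_eq, hmean]
  congr! 4 with ω
  rw [Fin.sum_univ_eq_sum_range (fun i => f (ω i)) n]

theorem tsum_prod_eq_one {X : Type*} [Countable X] {p : X → ℝ≥0∞} (hp : ∑' y, p y = 1)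
    (n : ℕ) : ∑' x : Fin n → X, ∏ t, p (x t) = 1 := by
  let _ : MeasurableSpace X := ⊤
  let q : PMF X := ⟨p, hp ▸ ENNReal.summable.hasSum⟩
  have := measure_pi_eq_tsum_prod q.toMeasure (Set.univ : Set (Fin n → X))
  simp only [measure_univ, PMF.toMeasure_apply_singleton _ _ .of_discrete] at this
  rw [← tsum_univ]
  exact this.symm

theorem PMF.integrable_of_summable {X : Type*} [MeasurableSpace X] [MeasurableSingletonClass X]
    [Countable X] (q : PMF X) {f : X → ℝ} (hf0 : ∀ y, 0 ≤ f y)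
    (hf : Summable fun y => (q y).toReal * f y) : Integrable f q.toMeasure := by
  refine ⟨.of_discrete, ?_⟩
  rw [HasFiniteIntegral, lintegral_countable']
  have hterm (y : X) : ‖f y‖ₑ * q.toMeasure {y} = ENNReal.ofReal ((q y).toReal * f y) := by
    rw [PMF.toMeasure_apply_singleton _ _ .of_discrete, Real.enorm_of_nonneg (hf0 y),
      ENNReal.ofReal_mul ENNReal.toReal_nonneg, ENNReal.ofReal_toReal (q.apply_ne_top y),
      mul_comm]
  simp only [hterm]
  rw [← ENNReal.ofReal_tsum_of_nonneg (fun y => mul_nonneg ENNReal.toReal_nonneg (hf0 y)) hf]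
  exact ENNReal.ofReal_lt_top

theorem log_one_div_toReal_nonneg {r : ℝ≥0∞} (hr : r ≤ 1) : 0 ≤ Real.log (1 / r.toReal) := by
  rw [one_div, Real.log_inv, neg_nonneg]
  exact Real.log_nonpos ENNReal.toReal_nonneg
    (ENNReal.toReal_le_of_le_ofReal zero_le_one (by simpa using hr))

theorem log_one_div_toReal_prod {ι : Type*} (s : Finset ι) {r : ι → ℝ≥0∞}
    (h0 : ∀ i ∈ s, r i ≠ 0) (htop : ∀ i ∈ s, r i ≠ ⊤) :
    Real.log (1 / (∏ i ∈ s, r i).toReal) = ∑ i ∈ s, Real.log (1 / (r i).toReal) := by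
  simp only [one_div, Real.log_inv, ENNReal.toReal_prod, Finset.sum_neg_distrib]
  rw [Real.log_prod fun i hi => ENNReal.toReal_ne_zero.2 ⟨h0 i hi, htop i hi⟩]

/-- `(1/n) log (1/r)`, with the junk value `0` at `r = 0` and `r = ∞`. -/
noncomputable def infoRate (n : ℕ) (r : ℝ≥0∞) : ℝ := 1 / (n : ℝ) * Real.log (1 / r.toReal)

theorem infoRate_le_infoRate_add {n : ℕ} {a b : ℝ≥0∞} {c : ℝ} (hc : 0 < c) (ha0 : a ≠ 0)
    (hatop : a ≠ ⊤) (hbtop : b ≠ ⊤) (hab : ENNReal.ofReal c * a ≤ b) :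
    infoRate n b ≤ infoRate n a + 1 / (n : ℝ) * Real.log (1 / c) := by
  have ha : 0 < a.toReal := ENNReal.toReal_pos ha0 hatop
  have hab' : c * a.toReal ≤ b.toReal := by
    simpa [ENNReal.toReal_mul, hc.le] using ENNReal.toReal_mono hbtop hab
  have hlog : Real.log (c * a.toReal) ≤ Real.log b.toReal :=
    Real.log_le_log (by positivity) hab'
  rw [Real.log_mul hc.ne' ha.ne'] at hlog
  simp only [infoRate, ← mul_add, one_div, Real.log_inv]
  gcongr
  linarith

theorem le_ofReal_exp_mul_of_infoRate_lt {n : ℕ} {a b : ℝ≥0∞} {s : ℝ} (hatop : a ≠ ⊤)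
    (hb0 : b ≠ 0) (hbtop : b ≠ ⊤) (hn : 0 < n) (hlt : infoRate n b + s < infoRate n a) :
    a ≤ ENNReal.ofReal (Real.exp (-(n * s))) * b := by
  have hb : 0 < b.toReal := ENNReal.toReal_pos hb0 hbtop
  rw [← ENNReal.ofReal_toReal hatop, ← ENNReal.ofReal_toReal hbtop,
    ← ENNReal.ofReal_mul (Real.exp_pos _).le]
  refine ENNReal.ofReal_le_ofReal ?_
  rcases ENNReal.toReal_nonneg.eq_or_lt with ha | ha
  · rw [← ha]; positivity
  have hn' : (0 : ℝ) < n := Nat.cast_pos.2 hn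
  simp only [infoRate, one_div, Real.log_inv] at hlt
  have : Real.log a.toReal + n * s < Real.log b.toReal := by
    have := mul_lt_mul_of_pos_left hlt hn'
    field_simp at this
    linarith
  rw [← Real.exp_log ha, ← Real.exp_log hb, ← Real.exp_add]
  exact Real.exp_le_exp.2 (by linarith)

theorem lt_abs_infoRate_sub_or_le_ofReal_exp_mul {n : ℕ} (hn : 0 < n) {a b : ℝ≥0∞}
    {c h γ : ℝ} (hc : 0 < c) (ha0 : a ≠ 0) (hatop : a ≠ ⊤) (hbtop : b ≠ ⊤)
    (hab : ENNReal.ofReal c * a ≤ b) (hcn : 1 / (n : ℝ) * Real.log (1 / c) ≤ γ / 2)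
    (hfar : γ < |infoRate n b - h|) :
    γ / 2 < |infoRate n a - h| ∨ a ≤ ENNReal.ofReal (Real.exp (-(n * (γ / 2)))) * b := by
  by_cases hnear : γ / 2 < |infoRate n a - h|
  · exact Or.inl hnear
  have hb0 : b ≠ 0 := fun h0 => ha0 <| by simpa [h0, hc.not_ge] using hab
  have hup := infoRate_le_infoRate_add (n := n) hc ha0 hatop hbtop hab
  rw [lt_abs] at hfar
  rw [not_lt, abs_le] at hnear
  refine Or.inr (le_ofReal_exp_mul_of_infoRate_lt hatop hb0 hbtop hn ?_)
  rcases hfar with hfar | hfar <;> linarith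

/-- The asymptotic equipartition property of a discrete memoryless source of finite entropy. -/
theorem tendsto_tsum_prod_infoRate_deviation {X : Type*} [Countable X] {p : X → ℝ≥0∞}
    (hp : ∑' y, p y = 1) {h : ℝ}
    (hh : HasSum (fun y => (p y).toReal * Real.log (1 / (p y).toReal)) h) {δ : ℝ} (hδ : 0 < δ) :
    Tendsto (fun n : ℕ => ∑' x : {x : Fin n → X // δ < |infoRate n (∏ t, p (x t)) - h|},
      ∏ t, p ((x : Fin n → X) t)) atTop (𝓝 0) := by
  let _ : MeasurableSpace X := ⊤
  let q : PMF X := ⟨p, hp ▸ ENNReal.summable.hasSum⟩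
  set μ := q.toMeasure
  have hμ (y : X) : μ {y} = p y := PMF.toMeasure_apply_singleton _ _ .of_discrete
  set I : X → ℝ := fun y => Real.log (1 / (p y).toReal)
  have hp1 (y : X) : p y ≤ 1 := hp ▸ ENNReal.le_tsum y
  have hptop (y : X) : p y ≠ ⊤ := ne_top_of_le_ne_top ENNReal.one_ne_top (hp1 y)
  have hI0 (y : X) : 0 ≤ I y := log_one_div_toReal_nonneg (hp1 y)
  have hIint : Integrable I μ := q.integrable_of_summable hI0 hh.summable
  have hIh : ∫ y, I y ∂μ = h := by
    rw [PMF.integral_eq_tsum _ _ hIint]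
    exact hh.tsum_eq
  have hlaw := weak_law_measure_pi μ (f := I) .of_discrete hIint hδ
  rw [hIh] at hlaw
  refine tendsto_of_tendsto_of_tendsto_of_le_of_le tendsto_const_nhds hlaw (fun _ => zero_le)
    fun n => ?_
  simp only [measure_pi_eq_tsum_prod, hμ]
  refine tsum_subtype_le_of_ne_zero (f := fun x : Fin n → X => ∏ t, p (x t))
    (s := {x | δ < |infoRate n (∏ t, p (x t)) - h|}) ?_
  intro x hx hx0
  rw [Finset.prod_ne_zero_iff] at hx0
  have hlog := log_one_div_toReal_prod Finset.univ (fun t _ => hx0 t (Finset.mem_univ t))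
    (fun t _ => hptop (x t))
  simp only [Set.mem_ofPred_eq, infoRate] at hx ⊢
  rw [hlog, one_div (n : ℝ)] at hx
  exact hx.le

theorem tendsto_tsum_prod_infoRate_deviation_of_le {X : Type*} [Countable X] {p : X → ℝ≥0∞}
    (hp : ∑' y, p y = 1) {h : ℝ}
    (hh : HasSum (fun y => (p y).toReal * Real.log (1 / (p y).toReal)) h)
    (q : ∀ n : ℕ, (Fin n → X) → ℝ≥0∞) (hq : ∀ n, ∑' x, q n x ≤ 1) {c : ℝ} (hc : 0 < c)
    (hpq : ∀ n x, ENNReal.ofReal c * ∏ t, p (x t) ≤ q n x) {γ : ℝ} (hγ : 0 < γ) :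
    Tendsto (fun n : ℕ => ∑' x : {x : Fin n → X // γ < |infoRate n (q n x) - h|},
      ∏ t, p ((x : Fin n → X) t)) atTop (𝓝 0) := by
  have hptop (y : X) : p y ≠ ⊤ :=
    ne_top_of_le_ne_top ENNReal.one_ne_top (hp ▸ ENNReal.le_tsum y)
  have hexp : Tendsto (fun n : ℕ => ENNReal.ofReal (Real.exp (-(n * (γ / 2))))) atTop (𝓝 0) := by
    simpa using ENNReal.tendsto_ofReal (Real.tendsto_exp_neg_atTop_nhds_zero.comp
      (tendsto_natCast_atTop_atTop.atTop_mul_const (half_pos hγ)))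
  have hlarge : ∀ᶠ n : ℕ in atTop, 0 < n ∧ 1 / (n : ℝ) * Real.log (1 / c) ≤ γ / 2 := by
    refine (eventually_gt_atTop 0).and ?_
    have := (tendsto_const_div_atTop_nhds_zero_nat (Real.log (1 / c))).eventually
      (eventually_le_nhds (half_pos hγ))
    filter_upwards [this] with n hn
    rwa [one_div_mul_eq_div]
  refine tendsto_of_tendsto_of_tendsto_of_le_of_le' tendsto_const_nhds
    (by simpa using (tendsto_tsum_prod_infoRate_deviation hp hh (half_pos hγ)).add hexp)
    (.of_forall fun _ => zero_le) ?_
  filter_upwards [hlarge] with n ⟨hn, hcn⟩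
  set P : (Fin n → X) → ℝ≥0∞ := fun x => ∏ t, p (x t)
  calc ∑' x : {x : Fin n → X // γ < |infoRate n (q n x) - h|}, P x
      ≤ ∑' x : ↥({x | γ / 2 < |infoRate n (P x) - h|} ∪
          {x | P x ≤ ENNReal.ofReal (Real.exp (-(n * (γ / 2)))) * q n x}), P x := by
        refine tsum_subtype_le_of_ne_zero (s := {x | γ < |infoRate n (q n x) - h|}) ?_
        intro x hx hx0
        have hPtop : P x ≠ ⊤ := ENNReal.prod_ne_top fun t _ => hptop (x t)
        have hqtop : q n x ≠ ⊤ := ne_top_of_le_ne_top ENNReal.one_ne_top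
          ((ENNReal.le_tsum x).trans (hq n))
        exact lt_abs_infoRate_sub_or_le_ofReal_exp_mul hn hc hx0 hPtop hqtop (hpq n x) hcn hx
    _ ≤ ∑' x : {x | γ / 2 < |infoRate n (P x) - h|}, P x +
          ∑' x : {x | P x ≤ ENNReal.ofReal (Real.exp (-(n * (γ / 2)))) * q n x}, P x :=
        ENNReal.tsum_union_le _ _ _
    _ ≤ ∑' x : {x : Fin n → X // γ / 2 < |infoRate n (P x) - h|}, P x +
          ENNReal.ofReal (Real.exp (-(n * (γ / 2)))) := by
        refine add_le_add le_rfl ?_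
        exact (tsum_subtype_le_mul_tsum P (q n) _).trans (mul_le_of_le_one_right' (hq n))

theorem tsum_subtype_mixture_eq {Y : Type*} {m : ℕ} (w : Fin m → ℝ) (p : Fin m → Y → ℝ≥0∞)
    (S : Set Y) :
    ∑' y : S, ∑ k, ENNReal.ofReal (w k) * p k y = ∑ k, ENNReal.ofReal (w k) * ∑' y : S, p k y := by
  rw [Summable.tsum_finsetSum fun _ _ => ENNReal.summable]
  simp only [ENNReal.tsum_mul_left]

theorem ofReal_sub_le_tsum_subtype_mixture {Y : Type*} {m : ℕ} {w : Fin m → ℝ}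
    {p : Fin m → Y → ℝ≥0∞} (hw : ∀ k, 0 ≤ w k) (hw1 : ∑ k, w k = 1)
    (hp : ∀ k, ∑' y, p k y = 1) {S : Set Y} {ε : ℝ} (hε : 0 ≤ ε) {i : Fin m}
    (hS : ∑' y : ↥Sᶜ, p i y ≤ ENNReal.ofReal ε) :
    ENNReal.ofReal (w i - ε) ≤ ∑' y : S, ∑ k, ENNReal.ofReal (w k) * p k y := by
  have hwi : ENNReal.ofReal (w i) ≤ 1 := ENNReal.ofReal_le_one.2 <|
    hw1 ▸ Finset.single_le_sum (fun k _ => hw k) (Finset.mem_univ i)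
  rw [ENNReal.ofReal_sub _ hε, tsub_le_iff_right, tsum_subtype_mixture_eq]
  calc ENNReal.ofReal (w i)
      = ENNReal.ofReal (w i) * ∑' y : S, p i y + ENNReal.ofReal (w i) * ∑' y : ↥Sᶜ, p i y := by
        rw [← mul_add, ENNReal.summable.tsum_add_tsum_compl ENNReal.summable, hp, mul_one]
    _ ≤ ∑ k, ENNReal.ofReal (w k) * ∑' y : S, p k y + ENNReal.ofReal ε := by
        gcongr
        · exact Finset.single_le_sum (f := fun k => ENNReal.ofReal (w k) * ∑' y : S, p k y)
            (fun _ _ => zero_le) (Finset.mem_univ i)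
        · exact (mul_le_of_le_one_left' hwi).trans hS

theorem tsum_subtype_mixture_le_ofReal_add {Y : Type*} {m : ℕ} {w : Fin m → ℝ}
    {p : Fin m → Y → ℝ≥0∞} (hw : ∀ k, 0 ≤ w k) (hw1 : ∑ k, w k = 1)
    (hp : ∀ k, ∑' y, p k y = 1) {G : Fin m → Set Y} (hG : Pairwise (Disjoint on G)) {ε : ℝ}
    (hε : 0 ≤ ε) (hpG : ∀ k, ∑' y : ↥(G k)ᶜ, p k y ≤ ENNReal.ofReal ε) (i : Fin m) :
    ∑' y : G i, ∑ k, ENNReal.ofReal (w k) * p k y ≤ ENNReal.ofReal (w i + ε) := by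
  have hmass (k : Fin m) : ∑' y : G i, p k y ≤ (if k = i then 1 else 0) + ENNReal.ofReal ε := by
    split_ifs with hki
    · subst hki
      exact le_add_right <|
        (ENNReal.tsum_comp_le_tsum_of_injective Subtype.val_injective _).trans (hp k).le
    · rw [zero_add]
      exact (ENNReal.tsum_mono_subtype _ (hG (Ne.symm hki)).subset_compl_right).trans (hpG k)
  calc ∑' y : G i, ∑ k, ENNReal.ofReal (w k) * p k y
      = ∑ k, ENNReal.ofReal (w k) * ∑' y : G i, p k y := tsum_subtype_mixture_eq w p (G i)
    _ ≤ ∑ k, ENNReal.ofReal (w k) * ((if k = i then 1 else 0) + ENNReal.ofReal ε) := by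
        gcongr with k; exact hmass k
    _ = ENNReal.ofReal (w i + ε) := by
        simp only [mul_add, mul_ite, mul_one, mul_zero, Finset.sum_add_distrib,
          Finset.sum_ite_eq', Finset.mem_univ, if_true, ← Finset.sum_mul]
        rw [← ENNReal.ofReal_sum_of_nonneg fun k _ => hw k, hw1, ENNReal.ofReal_one, one_mul,
          ENNReal.ofReal_add (hw i) hε]

theorem tsum_mixProd {X : Type*} [Countable X] {m : ℕ} {w : Fin m → ℝ}
    {P : Fin m → X → ℝ≥0∞} (hw : ∀ k, 0 ≤ w k) (hw1 : ∑ k, w k = 1)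
    (hP : ∀ k, ∑' x, P k x = 1) (n : ℕ) : ∑' x, mixProd w P n x = 1 := by
  simp only [mixProd]
  rw [Summable.tsum_finsetSum fun _ _ => ENNReal.summable]
  simp only [ENNReal.tsum_mul_left, tsum_prod_eq_one (hP _), mul_one]
  rw [← ENNReal.ofReal_sum_of_nonneg fun k _ => hw k, hw1, ENNReal.ofReal_one]

theorem ofReal_mul_prod_le_mixProd {X : Type*} {m : ℕ} (w : Fin m → ℝ) (P : Fin m → X → ℝ≥0∞)
    {n : ℕ} (x : Fin n → X) (k : Fin m) :
    ENNReal.ofReal (w k) * ∏ t, P k (x t) ≤ mixProd w P n x :=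
  Finset.single_le_sum (f := fun k => ENNReal.ofReal (w k) * ∏ t, P k (x t))
    (fun _ _ => zero_le) (Finset.mem_univ k)

theorem pairwise_disjoint_abs_sub_le {α ι : Type*} [LinearOrder ι] (f : α → ℝ) {H : ι → ℝ}
    {γ : ℝ} (hgap : ∀ j k, j < k → H k + γ < H j - γ) :
    Pairwise (Disjoint on fun k => {a | |f a - H k| ≤ γ}) := by
  intro j k hjk
  refine Set.disjoint_left.2 fun a hj hk => ?_
  rw [Set.mem_ofPred_eq, abs_le] at hj hk
  rcases hjk.lt_or_gt with hlt | hlt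
  · linarith [hgap j k hlt]
  · linarith [hgap k j hlt]

theorem mixture_spectrum_concentration_general {X : Type*} [Countable X] {m : ℕ}
    (w : Fin m → ℝ) (P : Fin m → X → ℝ≥0∞) (H : Fin m → ℝ)
    (hw : ∀ k, 0 < w k) (hw1 : ∑ k, w k = 1)
    (hP : ∀ k, ∑' x, P k x = 1)
    (hH : ∀ k, HasSum (fun x => (P k x).toReal * Real.log (1 / (P k x).toReal)) (H k))
    (γ : ℝ) (hγ : 0 < γ)
    (hgap : ∀ j k : Fin m, j < k → H k + γ < H j - γ) :
    ∃ n₀ : ℕ, ∀ n ≥ n₀, ∀ i : Fin m,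
      ENNReal.ofReal (w i - 2 * γ) ≤
        (∑' x : {y : Fin n → X //
            |(1 / (n : ℝ)) * Real.log (1 / (mixProd w P n y).toReal) - H i| ≤ γ},
          mixProd w P n (x : Fin n → X)) ∧
      (∑' x : {y : Fin n → X //
            |(1 / (n : ℝ)) * Real.log (1 / (mixProd w P n y).toReal) - H i| ≤ γ},
          mixProd w P n (x : Fin n → X)) ≤ ENNReal.ofReal (w i + 2 * γ) := by
  set G : ∀ n : ℕ, Fin m → Set (Fin n → X) :=
    fun n k => {y | |infoRate n (mixProd w P n y) - H k| ≤ γ}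
  have hfar (k : Fin m) :
      ∀ᶠ n in atTop, ∑' y : ↥(G n k)ᶜ, ∏ t, P k ((y : Fin n → X) t) ≤ ENNReal.ofReal γ := by
    have := tendsto_tsum_prod_infoRate_deviation_of_le (hP k) (hH k) (mixProd w P)
      (fun n => (tsum_mixProd (fun k => (hw k).le) hw1 hP n).le) (hw k)
      (fun _ x => ofReal_mul_prod_le_mixProd w P x k) hγ
    have hcompl (n : ℕ) : (G n k)ᶜ = {y | γ < |infoRate n (mixProd w P n y) - H k|} := by
      ext; simp [G]
    filter_upwards [this.eventually (eventually_le_nhds (ENNReal.ofReal_pos.2 hγ))] with n hn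
    rwa [hcompl]
  obtain ⟨n₀, hn₀⟩ := eventually_atTop.1 (eventually_all.2 hfar)
  refine ⟨n₀, fun n hn i => ⟨?_, ?_⟩⟩
  · exact (ENNReal.ofReal_le_ofReal (by linarith)).trans <|
      ofReal_sub_le_tsum_subtype_mixture (fun k => (hw k).le) hw1
        (fun k => tsum_prod_eq_one (hP k) n) hγ.le (hn₀ n hn i)
  · exact (tsum_subtype_mixture_le_ofReal_add (fun k => (hw k).le) hw1
      (fun k => tsum_prod_eq_one (hP k) n) (pairwise_disjoint_abs_sub_le _ hgap) hγ.le
      (hn₀ n hn) i).trans (ENNReal.ofReal_le_ofReal (by linarith))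

/-- Concentration of the information spectrum of a mixture on the component
entropies: if `γ > 0` separates the entropies (`H(X_j) - γ > H(X_{j+1}) + γ`),
then for all sufficiently large `n` and each component `i`,
`α_i - 2γ ≤ Pr[|(1/n) log(1/P_{X^n}(X^n)) - H(X_i)| ≤ γ] ≤ α_i + 2γ`. -/
theorem mixture_spectrum_concentration {X : Type*} [Countable X] {m : ℕ}
    (w : Fin m → ℝ) (P : Fin m → X → ℝ≥0∞) (H : Fin m → ℝ)
    (hw : ∀ k, 0 < w k) (hw1 : ∑ k, w k = 1)
    (hP : ∀ k, ∑' x, P k x = 1)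
    (hH : ∀ k, HasSum (fun x => (P k x).toReal * Real.log (1 / (P k x).toReal)) (H k))
    (hanti : StrictAnti H) (γ : ℝ) (hγ : 0 < γ)
    (hgap : ∀ j k : Fin m, j < k → H k + γ < H j - γ) :
    ∃ n₀ : ℕ, ∀ n ≥ n₀, ∀ i : Fin m,
      ENNReal.ofReal (w i - 2 * γ) ≤
        (∑' x : {y : Fin n → X //
            |(1 / (n : ℝ)) * Real.log (1 / (mixProd w P n y).toReal) - H i| ≤ γ},
          mixProd w P n (x : Fin n → X)) ∧
      (∑' x : {y : Fin n → X //
            |(1 / (n : ℝ)) * Real.log (1 / (mixProd w P n y).toReal) - H i| ≤ γ},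
          mixProd w P n (x : Fin n → X)) ≤ ENNReal.ofReal (w i + 2 * γ) :=
  mixture_spectrum_concentration_general w P H hw hw1 hP hH γ hγ hgap
end
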